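/- arXiv:1711.04420 — 11 statements merged into one kernel-verified Lean document; each statement's English description precedes it below -/
import Mathlib

section
/- Let X, Y be normed spaces and F : X ⇉ Y have a locally star-shaped graph at (x̄,ȳ), i.e. there is a ∈ (0,1] with (1−t)(x̄,ȳ) + t·graph F ⊆ graph F for all t ∈ [0,a]. If there are α, β > 0 with B[ȳ,β] ⊆ F(B[x̄,α]), then lopen F(x̄,ȳ) ≥ β/α. -/
open Metric Set Filter Topology
open scoped ENNReal NNReal

noncomputable section

/-- The image of a set under a set-valued mapping. -/
def SVImage {X Y : Type*} (F : X → Set Y) (s : Set X) : Set Y := ⋃ x ∈ s, F x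

/-- The modulus of openness (openness with a linear rate at a point). -/
def lopenMod {X Y : Type*} [PseudoMetricSpace X] [PseudoMetricSpace Y]
    (F : X → Set Y) (xb : X) (yb : Y) : ℝ≥0∞ :=
  sSup (ENNReal.ofReal '' {c : ℝ | 0 < c ∧ ∃ ε > (0:ℝ), ∀ t ∈ Ioo (0:ℝ) ε,
    closedBall yb (c * t) ⊆ SVImage F (closedBall xb t)})

/-- The modulus of surjection (openness with a linear rate around a point). -/
def surMod {X Y : Type*} [PseudoMetricSpace X] [PseudoMetricSpace Y]
    (F : X → Set Y) (xb : X) (yb : Y) : ℝ≥0∞ :=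
  sSup (ENNReal.ofReal '' {c : ℝ | 0 < c ∧ ∃ ε > (0:ℝ), ∃ U ∈ 𝓝 xb, ∃ V ∈ 𝓝 yb,
    ∀ x ∈ U, ∀ y ∈ V, y ∈ F x → ∀ t ∈ Ioo (0:ℝ) ε,
      closedBall y (c * t) ⊆ SVImage F (closedBall x t)})

/-- The semiregularity modulus. -/
def semiregMod {X Y : Type*} [PseudoMetricSpace X] [PseudoMetricSpace Y]
    (F : X → Set Y) (xb : X) (yb : Y) : ℝ≥0∞ :=
  sInf (ENNReal.ofReal '' {κ : ℝ | 0 < κ ∧ ∃ V ∈ 𝓝 yb, ∀ y ∈ V,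
    EMetric.infEdist xb {x | y ∈ F x} ≤ ENNReal.ofReal (κ * dist yb y)})

/-- The Lipschitz (Aubin) modulus of a set-valued mapping. -/
def lipMod {X Y : Type*} [PseudoMetricSpace X] [PseudoMetricSpace Y]
    (G : X → Set Y) (xb : X) (zb : Y) : ℝ≥0∞ :=
  sInf (ENNReal.ofReal '' {μ : ℝ | 0 < μ ∧ ∃ U ∈ 𝓝 xb, ∃ V ∈ 𝓝 zb,
    ∀ x ∈ U, ∀ x' ∈ U, ∀ z ∈ G x' ∩ V,
      EMetric.infEdist z (G x) ≤ ENNReal.ofReal (μ * dist x x')})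

/-- The calmness modulus of a single-valued mapping. -/
def calmMod {X Y : Type*} [PseudoMetricSpace X] [PseudoMetricSpace Y]
    (f : X → Y) (xb : X) : ℝ≥0∞ :=
  sInf (ENNReal.ofReal '' {μ : ℝ | 0 < μ ∧ ∃ U ∈ 𝓝 xb, ∀ x ∈ U,
    dist (f x) (f xb) ≤ μ * dist x xb})

end

/-- if `F` between normed spaces has a locally star-shaped graph at `(xb,yb)`
and `B[yb,β] ⊆ F(B[xb,α])`, then `lopen F (xb,yb) ≥ β/α`. -/
theorem lopen_ge_of_starShaped {X Y : Type*}
    [NormedAddCommGroup X] [NormedSpace ℝ X] [NormedAddCommGroup Y] [NormedSpace ℝ Y]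
    (F : X → Set Y) (xb : X) (yb : Y) (hgraph : yb ∈ F xb)
    (hstar : ∃ a ∈ Ioc (0:ℝ) 1, ∀ t ∈ Icc (0:ℝ) a, ∀ p : X × Y, p.2 ∈ F p.1 →
      ((1 - t) • ((xb, yb) : X × Y) + t • p).2 ∈ F ((1 - t) • ((xb, yb) : X × Y) + t • p).1)
    (α β : ℝ) (hα : 0 < α) (hβ : 0 < β)
    (hincl : closedBall yb β ⊆ SVImage F (closedBall xb α)) :
    ENNReal.ofReal (β / α) ≤ lopenMod F xb yb := by
  obtain ⟨a, ⟨ha0, ha1⟩, hstar⟩ := hstar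
  apply le_sSup
  refine ⟨β / α, ⟨div_pos hβ hα, a * α, mul_pos ha0 hα, ?_⟩, rfl⟩
  intro t ht y hy
  set s : ℝ := t / α with hs
  have hs0 : 0 < s := div_pos ht.1 hα
  have hsa : s ≤ a := le_of_lt ((div_lt_iff₀ hα).mpr (by linarith [ht.2]))
  set y' : Y := yb + s⁻¹ • (y - yb) with hy'
  have hy'ball : y' ∈ closedBall yb β := by
    rw [mem_closedBall, dist_eq_norm]
    have : y' - yb = s⁻¹ • (y - yb) := by simp [hy']
    rw [this, norm_smul, norm_inv, Real.norm_eq_abs, abs_of_pos hs0]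
    have hyt : ‖y - yb‖ ≤ β / α * t := by
      rw [← dist_eq_norm]; exact hy
    calc s⁻¹ * ‖y - yb‖ ≤ s⁻¹ * (β / α * t) := by
          exact mul_le_mul_of_nonneg_left hyt (inv_nonneg.mpr hs0.le)
      _ = β := by
          rw [hs]
          field_simp [ht.1.ne', hα.ne']
  have hx' := hincl hy'ball
  unfold SVImage at hx'
  rw [mem_iUnion₂] at hx'
  obtain ⟨x', hx'ball, hy'F⟩ := hx'
  have key := hstar s ⟨hs0.le, hsa⟩ (x', y') hy'F
  have hsnd : ((1 - s) • ((xb, yb) : X × Y) + s • (x', y')).2 = y := by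
    simp only [Prod.smul_snd, Prod.snd_add, Prod.smul_mk]
    rw [hy', smul_add, smul_smul, mul_inv_cancel₀ hs0.ne', one_smul]
    module
  rw [hsnd] at key
  unfold SVImage
  refine mem_iUnion₂.mpr ⟨((1 - s) • ((xb, yb) : X × Y) + s • (x', y')).1, ?_, key⟩
  simp only [Prod.smul_fst, Prod.fst_add, Prod.smul_mk]
  rw [mem_closedBall, dist_eq_norm]
  have : (1 - s) • xb + s • x' - xb = s • (x' - xb) := by module
  rw [this, norm_smul, Real.norm_eq_abs, abs_of_pos hs0]
  have hx'n : ‖x' - xb‖ ≤ α := by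
    rw [← dist_eq_norm]; exact hx'ball
  calc s * ‖x' - xb‖ ≤ s * α := mul_le_mul_of_nonneg_left hx'n hs0.le
    _ = t := by rw [hs]; field_simp
end

section
/- If X and Y are normed spaces and F : X ⇉ Y has a convex graph, then the modulus of openness of F at (x̄,ȳ) equals the modulus of surjection of F around (x̄,ȳ). -/
open Metric Set Filter Topology
open scoped ENNReal NNReal

/-!
If `F` has a convex graph and `(x, y)` lies on it, then for `0 < l ≤ 1` the homothety of ratio
`l` centred at `(x, y)` maps the graph into itself. Applied to one inclusion
`B[ȳ, c s] ⊆ F (B[x̄, s])` with `s` small, it yields inclusions `B[y, c' t] ⊆ F (B[x, t])` for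
all `(x, y)` on the graph near `(x̄, ȳ)`, all small `t` and any `c' < c`. Hence every rate of
openness at `(x̄, ȳ)` is approached by rates of surjection around it. Conversely, a rate of
surjection around a point of the graph is in particular a rate of openness at it.
-/

theorem svImage_mono {X Y : Type*} (F : X → Set Y) {s t : Set X} (hst : s ⊆ t) :
    SVImage F s ⊆ SVImage F t :=
  biUnion_subset_biUnion_left hst

theorem sSup_ofReal_image_le_of_forall_lt {S T : Set ℝ}
    (h : ∀ c ∈ S, ∀ c' ∈ Ioo 0 c, c' ∈ T) :
    sSup (ENNReal.ofReal '' S) ≤ sSup (ENNReal.ofReal '' T) := by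
  refine sSup_le ?_
  rintro _ ⟨c, hc, rfl⟩
  refine le_of_forall_lt fun b hb => ?_
  obtain ⟨r, -, hbr, hrc⟩ := ENNReal.lt_iff_exists_real_btwn.1 hb
  have hr0 : 0 < r := ENNReal.ofReal_pos.1 (pos_of_gt hbr)
  have hrc' : r < c := (ENNReal.ofReal_lt_ofReal_iff_of_nonneg hr0.le).1 hrc
  exact hbr.trans_le (le_sSup ⟨r, h c hc r ⟨hr0, hrc'⟩, rfl⟩)

section ConvexGraph

variable {X Y : Type*} [NormedAddCommGroup X] [NormedSpace ℝ X]
  [NormedAddCommGroup Y] [NormedSpace ℝ Y] {F : X → Set Y}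

theorem closedBall_subset_svImage_of_convex_graph
    (hconv : Convex ℝ {p : X × Y | p.2 ∈ F p.1}) {x x₀ : X} {y y₀ : Y} {ρ R l : ℝ}
    (hy : y ∈ F x) (hball : closedBall y₀ R ⊆ SVImage F (closedBall x₀ ρ))
    (hl0 : 0 < l) (hl1 : l ≤ 1) :
    closedBall y (l * (R - dist y y₀)) ⊆ SVImage F (closedBall x (l * (ρ + dist x x₀))) := by
  intro v hv
  rw [mem_closedBall] at hv
  set z := y + l⁻¹ • (v - y) with hz_def
  have hz : z ∈ closedBall y₀ R := by
    rw [mem_closedBall]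
    calc dist z y₀ ≤ dist y y₀ + l⁻¹ * dist v y := by
          rw [dist_eq_norm, dist_eq_norm, dist_eq_norm, hz_def, add_sub_right_comm]
          refine (norm_add_le _ _).trans_eq ?_
          rw [norm_smul, Real.norm_of_nonneg (inv_nonneg.2 hl0.le)]
      _ ≤ dist y y₀ + l⁻¹ * (l * (R - dist y y₀)) := by gcongr
      _ = R := by field_simp; ring
  obtain ⟨x', hx', hzx'⟩ := mem_iUnion₂.1 (hball hz)
  have hcomb : l • z + (1 - l) • y ∈ F (l • x' + (1 - l) • x) :=
    hconv (x := (x', z)) (y := (x, y)) hzx' hy hl0.le (sub_nonneg.2 hl1) (by ring)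
  have hv_eq : l • z + (1 - l) • y = v := by
    rw [hz_def, smul_add, smul_smul, mul_inv_cancel₀ hl0.ne', one_smul, sub_smul, one_smul]
    abel
  refine mem_iUnion₂.2 ⟨_, ?_, hv_eq ▸ hcomb⟩
  rw [mem_closedBall, dist_eq_norm]
  calc ‖l • x' + (1 - l) • x - x‖ = l * ‖x' - x‖ := by
        rw [show l • x' + (1 - l) • x - x = l • (x' - x) by
          rw [smul_sub, sub_smul, one_smul]; abel, norm_smul, Real.norm_of_nonneg hl0.le]
    _ ≤ l * (ρ + dist x x₀) := by
        rw [← dist_eq_norm]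
        gcongr
        exact (dist_triangle_right x' x x₀).trans (by rw [mem_closedBall] at hx'; linarith)

theorem exists_nhds_closedBall_subset_svImage_of_convex_graph
    (hconv : Convex ℝ {p : X × Y | p.2 ∈ F p.1}) {xb : X} {yb : Y} {c c' ε : ℝ}
    (hc'0 : 0 ≤ c') (hc' : c' < c) (hε : 0 < ε)
    (h : ∀ t ∈ Ioo 0 ε, closedBall yb (c * t) ⊆ SVImage F (closedBall xb t)) :
    ∃ ε' > (0 : ℝ), ∃ U ∈ 𝓝 xb, ∃ V ∈ 𝓝 yb, ∀ x ∈ U, ∀ y ∈ V, y ∈ F x →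
      ∀ t ∈ Ioo 0 ε', closedBall y (c' * t) ⊆ SVImage F (closedBall x t) := by
  set s := ε / 2
  set δ := (c - c') * s / (c' + 1) with hδ_def
  have hs : s ∈ Ioo 0 ε := ⟨half_pos hε, half_lt_self hε⟩
  have hδ : 0 < δ := div_pos (mul_pos (sub_pos.2 hc') hs.1) (by linarith)
  have hsδ : 0 < s + δ := add_pos hs.1 hδ
  have hδc : c' * (s + δ) + δ = c * s := by
    have : (c' + 1) * δ = (c - c') * s := by rw [hδ_def]; field_simp
    linarith
  refine ⟨s + δ, hsδ, ball xb δ, ball_mem_nhds _ hδ, ball yb δ, ball_mem_nhds _ hδ, ?_⟩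
  rintro x hx y hy hyF t ⟨ht0, ht⟩
  rw [mem_ball] at hx hy
  set l := t / (s + δ)
  have hl0 : 0 < l := div_pos ht0 hsδ
  have hl1 : l ≤ 1 := (div_le_one hsδ).2 ht.le
  have hlt : l * (s + δ) = t := div_mul_cancel₀ _ hsδ.ne'
  refine (closedBall_subset_closedBall ?_).trans
    ((closedBall_subset_svImage_of_convex_graph hconv hyF (h s hs) hl0 hl1).trans
      (svImage_mono F (closedBall_subset_closedBall ?_)))
  · calc c' * t = l * (c' * (s + δ)) := by rw [← hlt]; ring
      _ ≤ l * (c * s - dist y yb) := by gcongr; linarith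
  · calc l * (s + dist x xb) ≤ l * (s + δ) := by gcongr
      _ = t := hlt

end ConvexGraph

/-- if `F` between normed spaces has a convex graph, then the modulus of
openness of `F` at `(xb,yb)` equals the modulus of surjection of `F` around `(xb,yb)`. -/
theorem lopen_eq_sur_of_convexGraph {X Y : Type*}
    [NormedAddCommGroup X] [NormedSpace ℝ X] [NormedAddCommGroup Y] [NormedSpace ℝ Y]
    (F : X → Set Y) (xb : X) (yb : Y) (hgraph : yb ∈ F xb)
    (hconv : Convex ℝ {p : X × Y | p.2 ∈ F p.1}) :
    lopenMod F xb yb = surMod F xb yb := by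
  refine le_antisymm ?_ ?_
  · refine sSup_ofReal_image_le_of_forall_lt ?_
    rintro c ⟨-, ε, hε, hopen⟩ c' ⟨hc'0, hc'⟩
    exact ⟨hc'0, exists_nhds_closedBall_subset_svImage_of_convex_graph hconv hc'0.le hc' hε hopen⟩
  · refine sSup_le_sSup (image_mono ?_)
    rintro c ⟨hc, ε, hε, U, hU, V, hV, hsur⟩
    exact ⟨hc, ε, hε, hsur xb (mem_of_mem_nhds hU) yb (mem_of_mem_nhds hV) hgraph⟩
end

section
/- The modulus of openness lopen F(x̄,ȳ) equals the liminf, as y → ȳ with y ∉ F(x̄), of the ratio ρ(y,ȳ)/dist(x̄, F⁻¹(y)), with the convention that this liminf is ∞ when ȳ is an interior point of F(x̄). -/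
open Metric Set Filter Topology
open scoped ENNReal NNReal

/-- `lopen F (xb,yb)` equals the liminf, as `y → yb` with `y ∉ F xb`, of
`ρ(y,yb)/dist(xb, F⁻¹(y))` (with `inf ∅ = ∞`, and the liminf over the empty filter --
i.e. when `yb` is interior to `F xb` -- being `∞`). -/
theorem lopen_eq_liminf_ratio {X Y : Type*} [MetricSpace X] [MetricSpace Y]
    (F : X → Set Y) (xb : X) (yb : Y) (hgraph : yb ∈ F xb) :
    lopenMod F xb yb =
      Filter.liminf (fun y : Y =>
          ENNReal.ofReal (dist y yb) / EMetric.infEdist xb {x | y ∈ F x})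
        (𝓝 yb ⊓ 𝓟 {y : Y | y ∉ F xb}) := by
  set l := 𝓝 yb ⊓ 𝓟 {y : Y | y ∉ F xb} with hl
  set f : Y → ℝ≥0∞ :=
    fun y => ENNReal.ofReal (dist y yb) / EMetric.infEdist xb {x | y ∈ F x} with hf
  apply le_antisymm
  · -- lopenMod ≤ liminf
    apply sSup_le
    rintro _ ⟨c, ⟨hc, ε, hε, hprop⟩, rfl⟩
    refine Filter.le_liminf_of_le (by isBoundedDefault) ?_
    rw [hl, Filter.eventually_inf_principal]
    rw [Metric.eventually_nhds_iff]
    refine ⟨c * ε, by positivity, fun y hy hyF => ?_⟩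
    have hyne : y ≠ yb := fun h => hyF (h ▸ hgraph)
    have ha : (0:ℝ) < dist y yb := dist_pos.2 hyne
    set a : ℝ := dist y yb with hadef
    have hac : a / c < ε := (div_lt_iff₀' hc).2 hy
    have hac0 : 0 < a / c := div_pos ha hc
    -- infEdist bound
    have hle : EMetric.infEdist xb {x | y ∈ F x} ≤ ENNReal.ofReal (a / c) := by
      refine ENNReal.le_of_forall_pos_le_add fun η hη _ => ?_
      set t : ℝ := min (a / c + η) ((a / c + ε) / 2) with htdef
      have ht1 : a / c < t := lt_min (lt_add_of_pos_right _ (by exact_mod_cast hη)) (by linarith)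
      have ht2 : t < ε := lt_of_le_of_lt (min_le_right _ _) (by linarith)
      have ht0 : 0 < t := lt_trans hac0 ht1
      have hyball : y ∈ closedBall yb (c * t) := by
        rw [mem_closedBall]
        have := (div_lt_iff₀ hc).1 ht1
        rw [mul_comm] at this
        exact le_of_lt this
      obtain ⟨x, hxmem, hyFx⟩ : ∃ x ∈ closedBall xb t, y ∈ F x := by
        have := hprop t ⟨ht0, ht2⟩ hyball
        simpa [SVImage, mem_iUnion₂] using this
      calc EMetric.infEdist xb {x | y ∈ F x} ≤ edist xb x :=
            EMetric.infEdist_le_edist_of_mem hyFx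
        _ = ENNReal.ofReal (dist xb x) := by rw [edist_dist]
        _ ≤ ENNReal.ofReal t := ENNReal.ofReal_le_ofReal (by
            rw [← dist_comm x xb]; exact mem_closedBall.1 hxmem)
        _ ≤ ENNReal.ofReal (a / c + η) := ENNReal.ofReal_le_ofReal (min_le_left _ _)
        _ = ENNReal.ofReal (a / c) + η := by
            rw [ENNReal.ofReal_add (le_of_lt hac0) η.coe_nonneg, ENNReal.ofReal_coe_nnreal]
    -- conclude ofReal c ≤ f y
    rw [hf]
    have ha' : ENNReal.ofReal a ≠ 0 := by simp [ENNReal.ofReal_eq_zero, not_le, ha]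
    rw [ENNReal.le_div_iff_mul_le (Or.inr ha') (Or.inr ENNReal.ofReal_ne_top)]
    calc ENNReal.ofReal c * EMetric.infEdist xb {x | y ∈ F x}
        ≤ ENNReal.ofReal c * ENNReal.ofReal (a / c) := by
          exact mul_le_mul_right hle _
      _ = ENNReal.ofReal (c * (a / c)) := (ENNReal.ofReal_mul (le_of_lt hc)).symm
      _ = ENNReal.ofReal a := by rw [mul_div_cancel₀ _ (ne_of_gt hc)]
  · -- liminf ≤ lopenMod
    refine le_of_forall_lt fun b hb => ?_
    obtain ⟨r, hr0, hbr, hrL⟩ := ENNReal.lt_iff_exists_real_btwn.1 hb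
    have hrpos : 0 < r := by
      by_contra h
      push_neg at h
      have : ENNReal.ofReal r = 0 := by simp [ENNReal.ofReal_eq_zero, h]
      simp [this] at hbr
    refine lt_of_lt_of_le hbr (le_sSup ?_)
    refine ⟨r, ⟨hrpos, ?_⟩, rfl⟩
    have hev : ∀ᶠ y in l, ENNReal.ofReal r < f y :=
      Filter.eventually_lt_of_lt_liminf hrL
    rw [hl, Filter.eventually_inf_principal, Metric.eventually_nhds_iff] at hev
    obtain ⟨δ, hδ, hδ'⟩ := hev
    refine ⟨δ / r, by positivity, fun t ht y hy => ?_⟩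
    by_cases hyF : y ∈ F xb
    · exact mem_iUnion₂.2 ⟨xb, mem_closedBall_self (le_of_lt ht.1), hyF⟩
    · have ha : dist y yb ≤ r * t := mem_closedBall.1 hy
      have hyδ : dist y yb < δ := by
        calc dist y yb ≤ r * t := ha
          _ < r * (δ / r) := by exact mul_lt_mul_of_pos_left ht.2 hrpos
          _ = δ := by field_simp
      have hlt := hδ' (by simpa using hyδ) hyF
      have hdlt : EMetric.infEdist xb {x | y ∈ F x} < ENNReal.ofReal t := by
        by_contra h
        push_neg at h
        have hle : f y ≤ ENNReal.ofReal r := by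
          rw [hf]
          calc ENNReal.ofReal (dist y yb) / EMetric.infEdist xb {x | y ∈ F x}
              ≤ ENNReal.ofReal (dist y yb) / ENNReal.ofReal t :=
                ENNReal.div_le_div_left h _
            _ = ENNReal.ofReal (dist y yb / t) := (ENNReal.ofReal_div_of_pos ht.1).symm
            _ ≤ ENNReal.ofReal r := ENNReal.ofReal_le_ofReal
                ((div_le_iff₀ ht.1).2 (by linarith [ha]))
        exact (not_le.2 hlt) hle
      obtain ⟨x, hxFy, hxd⟩ := EMetric.infEdist_lt_iff.1 hdlt
      have : dist xb x < t := by rwa [edist_dist, ENNReal.ofReal_lt_ofReal_iff ht.1] at hxd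
      exact mem_iUnion₂.2 ⟨x, mem_closedBall.2 (by rw [dist_comm]; exact le_of_lt this), hxFy⟩
end

section
/- Let φ(y) = ρ(y,ȳ)/dist(x̄, F⁻¹(y)) for y ≠ ȳ and φ(ȳ) = 0, and set S = liminf_{y→ȳ, y∉F(x̄)} ρ(y,ȳ)·sup_{v≠y} (φ(y)−φ(v))/ρ(y,v). If Y is complete and y ↦ dist(x̄, F⁻¹(y)) is upper semicontinuous near ȳ, then S/2 ≤ lopen F(x̄,ȳ) ≤ S. -/
open Metric Set Filter Topology
open scoped ENNReal NNReal

open scoped Classical in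
/-- `φ(y) = ρ(y,yb)/dist(xb,F⁻¹(y))` for `y ≠ yb`, `φ(yb) = 0`. -/
noncomputable def phiFun {X Y : Type*} [MetricSpace X] [MetricSpace Y]
    (F : X → Set Y) (xb : X) (yb : Y) (y : Y) : ℝ≥0∞ :=
  if y = yb then 0
  else ENNReal.ofReal (dist y yb) / EMetric.infEdist xb {x | y ∈ F x}

/-- The slope-type quantity `S` from Theorem 3.1 of the paper. -/
noncomputable def slopeS {X Y : Type*} [MetricSpace X] [MetricSpace Y]
    (F : X → Set Y) (xb : X) (yb : Y) : ℝ≥0∞ :=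
  Filter.liminf (fun y : Y => ENNReal.ofReal (dist y yb) *
      ⨆ v : Y, ⨆ _ : v ≠ y,
        (phiFun F xb yb y - phiFun F xb yb v) / ENNReal.ofReal (dist y v))
    (𝓝 yb ⊓ 𝓟 {y : Y | y ∉ F xb})

/-!
Write `φ = phiFun F xb yb` and let `y → yb` with `y ∉ F xb`. Up to strict inequalities,
`φ y ≥ c` says that `y ∈ F(B[xb, ρ(y, yb) / c])`, so `lopen F (xb, yb) = liminf φ`. Taking
`v = yb` in the supremum defining `S` gives `φ y ≤ ρ(y, yb) * globalSlope φ y`, hence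
`lopen ≤ S`. Conversely, `φ = ρ(·, yb) / dist(xb, F⁻¹(·))` is lower semicontinuous near `yb`,
so Ekeland's principle, started at a point `y` where `φ y` is close to the liminf and run with
step `ρ(y, yb) / (1 + t)`, produces a point `z ∉ F xb` near `yb` with
`ρ(z, yb) * globalSlope φ z ≤ (2 + 4 t) φ y`. Letting `t → 0` gives `S ≤ 2 lopen`.
-/

section Ekeland

variable {Z : Type*} [PseudoEMetricSpace Z] {f : Z → ℝ≥0∞} {κ : ℝ≥0∞}

def ekelandSet (f : Z → ℝ≥0∞) (κ : ℝ≥0∞) (x : Z) : Set Z := {u | f u + κ * edist u x ≤ f x}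

lemma mem_ekelandSet_self (x : Z) : x ∈ ekelandSet f κ x := by
  simp [ekelandSet]

lemma le_of_mem_ekelandSet {u x : Z} (hu : u ∈ ekelandSet f κ x) : f u ≤ f x :=
  le_self_add.trans hu

lemma ekelandSet_trans {u x y : Z} (hu : u ∈ ekelandSet f κ x) (hx : x ∈ ekelandSet f κ y) :
    u ∈ ekelandSet f κ y :=
  calc f u + κ * edist u y ≤ f u + κ * edist u x + κ * edist x y := by
        rw [add_assoc, ← mul_add]; gcongr; exact edist_triangle _ _ _
    _ ≤ f x + κ * edist x y := by gcongr; exact hu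
    _ ≤ f y := hx

lemma isClosed_ekelandSet (hf : LowerSemicontinuous f) (hκ : κ ≠ ⊤) (x : Z) :
    IsClosed (ekelandSet f κ x) :=
  (hf.add ((ENNReal.continuous_const_mul hκ).comp
    (continuous_id.edist continuous_const)).lowerSemicontinuous).isClosed_preimage (f x)

lemma exists_mem_ekelandSet_forall_le_add {δ : ℝ≥0∞} (hδ : δ ≠ 0) (x : Z) :
    ∃ w ∈ ekelandSet f κ x, ∀ u ∈ ekelandSet f κ x, f w ≤ f u + δ := by
  by_cases hm : ⨅ u ∈ ekelandSet f κ x, f u = ⊤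
  · refine ⟨x, mem_ekelandSet_self x, fun u hu => ?_⟩
    simp [top_le_iff.1 (hm ▸ iInf₂_le u hu)]
  · obtain ⟨w, hw⟩ := iInf_lt_iff.1 (ENNReal.lt_add_right hm hδ)
    obtain ⟨hwS, hlt⟩ := iInf_lt_iff.1 hw
    exact ⟨w, hwS, fun u hu => hlt.le.trans (by gcongr; exact iInf₂_le u hu)⟩

theorem LowerSemicontinuous.exists_ekeland [CompleteSpace Z] (hf : LowerSemicontinuous f)
    (hκ0 : κ ≠ 0) (hκ : κ ≠ ⊤) {y₀ : Z} (hy₀ : f y₀ ≠ ⊤) :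
    ∃ z, f z + κ * edist z y₀ ≤ f y₀ ∧ ∀ v, f z ≤ f v + κ * edist z v := by
  -- The tolerance `κ / 2 ^ n` makes the Ekeland sets along the sequence shrink geometrically.
  choose w hw hw_min using fun (n : ℕ) (x : Z) =>
    exists_mem_ekelandSet_forall_le_add (f := f) (κ := κ) (δ := κ * (1 / 2 ^ n))
      (mul_ne_zero hκ0 (by simp)) x
  let x : ℕ → Z := fun n => Nat.rec y₀ w n
  have hx_succ (n : ℕ) : x (n + 1) = w n (x n) := rfl
  have hx_mem {n m : ℕ} (hnm : n ≤ m) : x m ∈ ekelandSet f κ (x n) := by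
    induction m, hnm using Nat.le_induction with
    | base => exact mem_ekelandSet_self _
    | succ m _ ih => exact ekelandSet_trans (hx_succ m ▸ hw m (x m)) ih
  have hx_shrink (n : ℕ) {u : Z} (hu : u ∈ ekelandSet f κ (x (n + 1))) :
      edist u (x (n + 1)) ≤ 1 / 2 ^ n := by
    have hu_fin : f u ≠ ⊤ :=
      ne_top_of_le_ne_top hy₀
        (le_of_mem_ekelandSet (ekelandSet_trans hu (hx_mem (Nat.zero_le (n + 1)))))
    have hmin : f (x (n + 1)) ≤ f u + κ * (1 / 2 ^ n) :=
      hx_succ n ▸ hw_min n (x n) u (ekelandSet_trans hu (hx_mem n.le_succ))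
    rw [← ENNReal.mul_le_mul_iff_right hκ0 hκ, ← ENNReal.add_le_add_iff_left hu_fin]
    exact hu.trans hmin
  have hcauchy : CauchySeq x := by
    refine (cauchySeq_shift 1).1 (cauchySeq_of_edist_le_geometric_two 1 ENNReal.one_ne_top ?_)
    intro n
    rw [edist_comm]
    exact hx_shrink n (hx_mem (n + 1).le_succ)
  obtain ⟨z, hz⟩ := cauchySeq_tendsto_of_complete hcauchy
  have hz_mem (n : ℕ) : z ∈ ekelandSet f κ (x n) :=
    (isClosed_ekelandSet hf hκ _).mem_of_tendsto hz
      ((eventually_ge_atTop n).mono fun _ => hx_mem)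
  refine ⟨z, hz_mem 0, fun v => le_of_not_gt fun hv => ?_⟩
  have hv_mem : v ∈ ekelandSet f κ z := by
    show f v + κ * edist v z ≤ f z
    rw [edist_comm]; exact hv.le
  have hzv (n : ℕ) : f z ≤ f v + κ * (1 / 2 ^ n) :=
    (le_of_mem_ekelandSet (hz_mem (n + 1))).trans
      (hx_succ n ▸ hw_min n (x n) v (ekelandSet_trans hv_mem (hz_mem n)))
  have hlim : Tendsto (fun n : ℕ => f v + κ * (1 / 2 ^ n)) atTop (𝓝 (f v)) := by
    have h2 : Tendsto (fun n : ℕ => (1 : ℝ≥0∞) / 2 ^ n) atTop (𝓝 0) := by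
      simpa only [one_div, ENNReal.inv_pow] using
        ENNReal.tendsto_pow_atTop_nhds_zero_of_lt_one (ENNReal.inv_lt_one.2 ENNReal.one_lt_two)
    simpa using tendsto_const_nhds.add (ENNReal.Tendsto.const_mul h2 (Or.inr hκ))
  exact (ge_of_tendsto' hlim hzv).not_gt (lt_of_le_of_lt le_self_add hv)

theorem LowerSemicontinuousOn.exists_ekeland [CompleteSpace Z] {C : Set Z} (hC : IsClosed C)
    (hf : LowerSemicontinuousOn f C) (hκ0 : κ ≠ 0) (hκ : κ ≠ ⊤) {y₀ : Z} (hy₀C : y₀ ∈ C)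
    (hy₀ : f y₀ ≠ ⊤) :
    ∃ z ∈ C, f z + κ * edist z y₀ ≤ f y₀ ∧ ∀ v ∈ C, f z ≤ f v + κ * edist z v := by
  have := hC.completeSpace_coe
  obtain ⟨z, hz, hz_min⟩ :=
    (lowerSemicontinuous_restrict_iff.2 hf).exists_ekeland hκ0 hκ (y₀ := ⟨y₀, hy₀C⟩) hy₀
  exact ⟨z, z.2, hz, fun v hv => hz_min ⟨v, hv⟩⟩

end Ekeland

theorem LowerSemicontinuousOn.ennreal_mul {α : Type*} [TopologicalSpace α] {f g : α → ℝ≥0∞}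
    {s : Set α} (hf : LowerSemicontinuousOn f s) (hg : LowerSemicontinuousOn g s) :
    LowerSemicontinuousOn (fun x => f x * g x) s := by
  rw [lowerSemicontinuousOn_iff_le_liminf] at hf hg ⊢
  exact fun x hx => (mul_le_mul' (hf x hx) (hg x hx)).trans ENNReal.le_liminf_mul

theorem liminf_le_liminf_of_eventually_exists {Y β : Type*} [PseudoMetricSpace Y]
    [CompleteLinearOrder β] [DenselyOrdered β] {b : Y} {A : Set Y} {u g : Y → β}
    (h : ∀ᶠ y in 𝓝 b ⊓ 𝓟 A, ∃ z ∈ A, dist z b ≤ 2 * dist y b ∧ u z ≤ g y) :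
    liminf u (𝓝 b ⊓ 𝓟 A) ≤ liminf g (𝓝 b ⊓ 𝓟 A) := by
  refine le_of_forall_gt_imp_ge_of_dense fun c hc => liminf_le_of_frequently_le' ?_
  rw [(nhds_basis_ball.inf_principal A).frequently_iff]
  intro ε hε
  have hnear : ∀ᶠ y in 𝓝 b ⊓ 𝓟 A, dist y b < ε / 2 :=
    mem_inf_of_left (ball_mem_nhds b (half_pos hε))
  obtain ⟨y, hgy, ⟨z, hzA, hzb, hzy⟩, hyb⟩ :=
    ((frequently_lt_of_liminf_lt (by isBoundedDefault) hc).and_eventually (h.and hnear)).exists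
  exact ⟨z, ⟨mem_ball.2 (by linarith), hzA⟩, hzy.trans hgy.le⟩

section GlobalSlope

variable {Y : Type*} [PseudoMetricSpace Y] {f : Y → ℝ≥0∞}

noncomputable def globalSlope (f : Y → ℝ≥0∞) (y : Y) : ℝ≥0∞ :=
  ⨆ v : Y, ⨆ _ : v ≠ y, (f y - f v) / ENNReal.ofReal (dist y v)

lemma globalSlope_le_add_div {z : Y} {κ : ℝ≥0∞} {r : ℝ}
    (h : ∀ v, dist v z < r → f z ≤ f v + κ * edist z v) :
    globalSlope f z ≤ κ + f z / ENNReal.ofReal r := by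
  refine iSup₂_le fun v _ => ?_
  rcases lt_or_ge (dist v z) r with hv | hv
  · refine le_add_right (ENNReal.div_le_of_le_mul ?_)
    rw [← edist_dist]
    exact tsub_le_iff_left.2 (h v hv)
  · refine le_add_left (ENNReal.div_le_div tsub_le_self (ENNReal.ofReal_le_ofReal ?_))
    rwa [dist_comm]

theorem exists_dist_le_globalSlope_le [CompleteSpace Y] {y : Y} {s r : ℝ} (hs : 0 < s)
    (hr : 0 < r) (hf : LowerSemicontinuousOn f (closedBall y (s + r))) (hfy : f y ≠ ⊤) :
    ∃ z, dist z y ≤ s ∧ f z ≤ f y ∧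
      globalSlope f z ≤ f y / ENNReal.ofReal s + f y / ENNReal.ofReal r := by
  by_cases hfy0 : f y = 0
  · refine ⟨y, by simpa using hs.le, le_rfl, ?_⟩
    simp [globalSlope, hfy0]
  have hs' : ENNReal.ofReal s ≠ 0 := (ENNReal.ofReal_pos.2 hs).ne'
  set κ := f y / ENNReal.ofReal s
  have hκ0 : κ ≠ 0 := (ENNReal.div_pos hfy0 ENNReal.ofReal_ne_top).ne'
  have hκ : κ ≠ ⊤ := ENNReal.div_ne_top hfy hs'
  obtain ⟨z, -, hzy, hz_min⟩ := hf.exists_ekeland isClosed_closedBall hκ0 hκ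
    (mem_closedBall_self (by linarith)) hfy
  have hdist : dist z y ≤ s := by
    have h : κ * edist z y ≤ κ * ENNReal.ofReal s := by
      rw [ENNReal.div_mul_cancel hs' ENNReal.ofReal_ne_top]
      exact le_add_self.trans hzy
    rwa [ENNReal.mul_le_mul_iff_right hκ0 hκ, edist_dist,
      ENNReal.ofReal_le_ofReal_iff hs.le] at h
  have hfz : f z ≤ f y := le_self_add.trans hzy
  refine ⟨z, hdist, hfz, (globalSlope_le_add_div fun v hv => hz_min v ?_).trans (by gcongr)⟩
  rw [mem_closedBall]
  linarith [dist_triangle v z y]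

end GlobalSlope

lemma sub_le_dist_mul_globalSlope {Y : Type*} [MetricSpace Y] {f : Y → ℝ≥0∞} {y b : Y}
    (hyb : y ≠ b) : f y - f b ≤ ENNReal.ofReal (dist y b) * globalSlope f y := by
  have hd : ENNReal.ofReal (dist y b) ≠ 0 := (ENNReal.ofReal_pos.2 (dist_pos.2 hyb)).ne'
  calc f y - f b = ENNReal.ofReal (dist y b) * ((f y - f b) / ENNReal.ofReal (dist y b)) :=
        (ENNReal.mul_div_cancel hd ENNReal.ofReal_ne_top).symm
    _ ≤ _ := by gcongr; exact le_iSup₂_of_le b hyb.symm le_rfl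

section SVImage

variable {X Y : Type*} [PseudoMetricSpace X] {F : X → Set Y} {xb : X} {y : Y} {t : ℝ}

lemma infEDist_le_of_mem_SVImage (h : y ∈ SVImage F (closedBall xb t)) :
    infEDist xb {x | y ∈ F x} ≤ ENNReal.ofReal t := by
  obtain ⟨x, hx, hyx⟩ := mem_iUnion₂.1 h
  calc infEDist xb {x | y ∈ F x} ≤ edist xb x := infEDist_le_edist_of_mem hyx
    _ ≤ ENNReal.ofReal t := by
      rw [edist_dist, dist_comm]; exact ENNReal.ofReal_le_ofReal (mem_closedBall.1 hx)

lemma mem_SVImage_of_infEDist_lt (h : infEDist xb {x | y ∈ F x} < ENNReal.ofReal t) :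
    y ∈ SVImage F (closedBall xb t) := by
  obtain ⟨x, hyx, hx⟩ := infEDist_lt_iff.1 h
  rw [edist_dist, ENNReal.ofReal_lt_ofReal_iff_of_nonneg dist_nonneg] at hx
  exact mem_iUnion₂.2 ⟨x, mem_closedBall.2 (by rw [dist_comm]; exact hx.le), hyx⟩

end SVImage

section SetValued

variable {X Y : Type*} [MetricSpace X] [MetricSpace Y] {F : X → Set Y} {xb : X} {yb : Y}
  {y : Y} {t : ℝ}

lemma phiFun_eq (y : Y) :
    phiFun F xb yb y = ENNReal.ofReal (dist y yb) * (infEDist xb {x | y ∈ F x})⁻¹ := by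
  by_cases h : y = yb
  · simp [phiFun, h]
  · simp only [phiFun, if_neg h, div_eq_mul_inv]
    -- the deprecated `EMetric.infEdist` in `phiFun` unfolds to `infEDist`
    rfl

lemma phiFun_self : phiFun F xb yb yb = 0 := by
  simp [phiFun]

lemma phiFun_eq_top (hy : y ≠ yb) (hyF : y ∈ F xb) : phiFun F xb yb y = ⊤ := by
  rw [phiFun_eq, infEDist_zero_of_mem (show xb ∈ {x | y ∈ F x} from hyF), ENNReal.inv_zero,
    ENNReal.mul_top (ENNReal.ofReal_pos.2 (dist_pos.2 hy)).ne']

lemma ofReal_div_le_phiFun (ht : 0 < t)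
    (h : infEDist xb {x | y ∈ F x} ≤ ENNReal.ofReal t) :
    ENNReal.ofReal (dist y yb / t) ≤ phiFun F xb yb y := by
  rw [phiFun_eq, ENNReal.ofReal_div_of_pos ht, div_eq_mul_inv]
  gcongr

lemma infEDist_lt_of_lt_phiFun {c : ℝ} (hc : 0 < c) (h : ENNReal.ofReal c < phiFun F xb yb y) :
    infEDist xb {x | y ∈ F x} < ENNReal.ofReal (dist y yb / c) := by
  have hc0 : ENNReal.ofReal c ≠ 0 := (ENNReal.ofReal_pos.2 hc).ne'
  rw [phiFun_eq, ← div_eq_mul_inv,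
    ENNReal.lt_div_iff_mul_lt (Or.inr ENNReal.ofReal_ne_top) (Or.inr hc0)] at h
  rw [ENNReal.ofReal_div_of_pos hc,
    ENNReal.lt_div_iff_mul_lt (Or.inl hc0) (Or.inl ENNReal.ofReal_ne_top), mul_comm]
  exact h

lemma lowerSemicontinuousOn_phiFun {V : Set Y}
    (husc : UpperSemicontinuousOn (fun y => infEDist xb {x | y ∈ F x}) V) :
    LowerSemicontinuousOn (phiFun F xb yb) V := by
  simp only [funext (phiFun_eq (F := F) (xb := xb) (yb := yb))]
  have hdist : Continuous fun y => ENNReal.ofReal (dist y yb) :=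
    ENNReal.continuous_ofReal.comp (continuous_id.dist continuous_const)
  exact (hdist.lowerSemicontinuous.lowerSemicontinuousOn V).ennreal_mul
    ((continuous_inv (G := ℝ≥0∞)).comp_upperSemicontinuousOn_antitone husc
      fun _ _ h => ENNReal.inv_le_inv.2 h)

lemma lopenMod_le_liminf_phiFun (hgraph : yb ∈ F xb) :
    lopenMod F xb yb ≤ liminf (phiFun F xb yb) (𝓝 yb ⊓ 𝓟 {y | y ∉ F xb}) := by
  refine sSup_le ?_
  rintro _ ⟨c, ⟨hc, ε, hε, hcε⟩, rfl⟩
  refine le_liminf_of_le (by isBoundedDefault) ?_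
  rw [eventually_inf_principal]
  filter_upwards [ball_mem_nhds yb (mul_pos hc hε)] with y hy hyF
  have hρ : 0 < dist y yb := dist_pos.2 (ne_of_mem_of_not_mem hgraph hyF).symm
  have ht : dist y yb / c ∈ Ioo 0 ε :=
    ⟨div_pos hρ hc, (div_lt_iff₀ hc).2 (by rw [mul_comm]; exact mem_ball.1 hy)⟩
  have hy_img := hcε _ ht (mem_closedBall.2 (by rw [mul_div_cancel₀ _ hc.ne']))
  calc ENNReal.ofReal c = ENNReal.ofReal (dist y yb / (dist y yb / c)) := by
        rw [div_div_cancel₀ hρ.ne']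
    _ ≤ phiFun F xb yb y := ofReal_div_le_phiFun ht.1 (infEDist_le_of_mem_SVImage hy_img)

lemma liminf_phiFun_le_lopenMod :
    liminf (phiFun F xb yb) (𝓝 yb ⊓ 𝓟 {y | y ∉ F xb}) ≤ lopenMod F xb yb := by
  refine ENNReal.le_of_forall_pos_nnreal_lt fun c hc hcl => ?_
  have hc' : (0 : ℝ) < c := hc
  obtain ⟨r, hr, hφ_gt⟩ := Metric.eventually_nhds_iff.1
    (eventually_inf_principal.1 (eventually_lt_of_lt_liminf hcl))
  refine le_sSup
    ⟨c, ⟨hc', r / c, div_pos hr hc', fun t ht y hy => ?_⟩, ENNReal.ofReal_coe_nnreal⟩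
  by_cases hyF : y ∈ F xb
  · exact mem_iUnion₂.2 ⟨xb, mem_closedBall_self ht.1.le, hyF⟩
  · have hyc : dist y yb ≤ c * t := mem_closedBall.1 hy
    have hyr : dist y yb < r := hyc.trans_lt (by rw [← lt_div_iff₀' hc']; exact ht.2)
    refine mem_SVImage_of_infEDist_lt ((infEDist_lt_of_lt_phiFun (yb := yb) hc' ?_).trans_le ?_)
    · rw [ENNReal.ofReal_coe_nnreal]; exact hφ_gt hyr hyF
    · exact ENNReal.ofReal_le_ofReal ((div_le_iff₀' hc').2 hyc)

lemma slopeS_eq_liminf_globalSlope : slopeS F xb yb = liminf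
    (fun y => ENNReal.ofReal (dist y yb) * globalSlope (phiFun F xb yb) y)
    (𝓝 yb ⊓ 𝓟 {y | y ∉ F xb}) :=
  rfl

lemma liminf_phiFun_le_slopeS (hgraph : yb ∈ F xb) :
    liminf (phiFun F xb yb) (𝓝 yb ⊓ 𝓟 {y | y ∉ F xb}) ≤ slopeS F xb yb := by
  rw [slopeS_eq_liminf_globalSlope]
  refine liminf_le_liminf (eventually_inf_principal.2 (Eventually.of_forall fun y hyF => ?_))
  simpa [phiFun_self] using
    sub_le_dist_mul_globalSlope (f := phiFun F xb yb) (ne_of_mem_of_not_mem hgraph hyF).symm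

lemma eventually_exists_dist_mul_globalSlope_le [CompleteSpace Y] {V : Set Y}
    (hgraph : yb ∈ F xb) (hV : V ∈ 𝓝 yb)
    (husc : UpperSemicontinuousOn (fun y => infEDist xb {x | y ∈ F x}) V) {t : ℝ} (ht : 0 < t) :
    ∀ᶠ y in 𝓝 yb ⊓ 𝓟 {y | y ∉ F xb}, ∃ z ∈ {y | y ∉ F xb}, dist z yb ≤ 2 * dist y yb ∧
      ENNReal.ofReal (dist z yb) * globalSlope (phiFun F xb yb) z ≤
        ENNReal.ofReal (2 + 4 * t) * phiFun F xb yb y := by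
  obtain ⟨R, hR, hRV⟩ := nhds_basis_closedBall.mem_iff.1 hV
  rw [eventually_inf_principal]
  filter_upwards [ball_mem_nhds yb (show 0 < R * t / (2 * t + 1) by positivity)] with y hy hyF
  set ρ := dist y yb
  have hρ : 0 < ρ := dist_pos.2 (ne_of_mem_of_not_mem hgraph hyF).symm
  by_cases hφy : phiFun F xb yb y = ⊤
  · refine ⟨y, hyF, by linarith, ?_⟩
    rw [hφy, ENNReal.mul_top (ENNReal.ofReal_pos.2 (by positivity)).ne']
    exact le_top
  -- The Ekeland step `ρ / (1 + t) < ρ` keeps `z` off `yb`, and with the outer radius `ρ / t`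
  -- the constant becomes `2 * ρ * ((1 + t) / ρ + t / ρ) = 2 + 4 * t`.
  have hball : closedBall y (ρ / (1 + t) + ρ / t) ⊆ closedBall yb R := by
    refine closedBall_subset_closedBall' ?_
    rw [mem_ball, lt_div_iff₀ (by positivity)] at hy
    have h1 : ρ / (1 + t) ≤ ρ := div_le_self hρ.le (by linarith)
    have h2 : ρ / t + ρ + ρ ≤ R := by
      rw [div_add' _ _ _ ht.ne', div_add' _ _ _ ht.ne', div_le_iff₀ ht]; linarith
    linarith
  obtain ⟨z, hzy, hφz, hslope⟩ := exists_dist_le_globalSlope_le (by positivity) (by positivity)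
    ((lowerSemicontinuousOn_phiFun husc).mono (hball.trans hRV)) hφy
  have hzy' : dist z y < ρ := hzy.trans_lt (div_lt_self hρ (by linarith))
  have hz_ne : z ≠ yb := by
    rintro rfl
    exact hzy'.ne (dist_comm _ _)
  have hzF : z ∉ F xb := fun hzF => hφy (top_le_iff.1 (phiFun_eq_top hz_ne hzF ▸ hφz))
  have hzb : dist z yb ≤ 2 * ρ := by linarith [dist_triangle z y yb]
  refine ⟨z, hzF, hzb, ?_⟩
  calc ENNReal.ofReal (dist z yb) * globalSlope (phiFun F xb yb) z
      ≤ ENNReal.ofReal (2 * ρ) * (phiFun F xb yb y / ENNReal.ofReal (ρ / (1 + t)) +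
          phiFun F xb yb y / ENNReal.ofReal (ρ / t)) := by gcongr
    _ = ENNReal.ofReal (2 + 4 * t) * phiFun F xb yb y := by
      rw [div_eq_mul_inv (phiFun F xb yb y), div_eq_mul_inv (phiFun F xb yb y), ← mul_add,
        ← ENNReal.ofReal_inv_of_pos (by positivity), ← ENNReal.ofReal_inv_of_pos (by positivity),
        ← ENNReal.ofReal_add (by positivity) (by positivity), mul_left_comm,
        ← ENNReal.ofReal_mul (by positivity), mul_comm]
      congr 2
      field_simp
      ring

lemma slopeS_le_ofReal_mul_liminf_phiFun [CompleteSpace Y] {V : Set Y}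
    (hgraph : yb ∈ F xb) (hV : V ∈ 𝓝 yb)
    (husc : UpperSemicontinuousOn (fun y => infEDist xb {x | y ∈ F x}) V) {t : ℝ} (ht : 0 < t) :
    slopeS F xb yb ≤
      ENNReal.ofReal (2 + 4 * t) * liminf (phiFun F xb yb) (𝓝 yb ⊓ 𝓟 {y | y ∉ F xb}) := by
  rw [slopeS_eq_liminf_globalSlope, ← ENNReal.liminf_const_mul_of_ne_zero_of_ne_top
    (ENNReal.ofReal_pos.2 (by positivity)).ne' ENNReal.ofReal_ne_top]
  exact liminf_le_liminf_of_eventually_exists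
    (eventually_exists_dist_mul_globalSlope_le hgraph hV husc ht)

lemma slopeS_le_two_mul_liminf_phiFun [CompleteSpace Y] {V : Set Y}
    (hgraph : yb ∈ F xb) (hV : V ∈ 𝓝 yb)
    (husc : UpperSemicontinuousOn (fun y => infEDist xb {x | y ∈ F x}) V) :
    slopeS F xb yb ≤ 2 * liminf (phiFun F xb yb) (𝓝 yb ⊓ 𝓟 {y | y ∉ F xb}) := by
  have hcoef : Tendsto (fun t : ℝ => ENNReal.ofReal (2 + 4 * t)) (𝓝[>] 0) (𝓝 2) := by
    have h : Tendsto (fun t : ℝ => 2 + 4 * t) (𝓝[>] 0) (𝓝 2) :=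
      ((by fun_prop : Continuous fun t : ℝ => 2 + 4 * t).tendsto' 0 2 (by norm_num)).mono_left
        nhdsWithin_le_nhds
    simpa using ENNReal.tendsto_ofReal h
  exact ge_of_tendsto (ENNReal.Tendsto.mul_const hcoef (Or.inl two_ne_zero))
    (eventually_nhdsWithin_of_forall fun _ ht =>
      slopeS_le_ofReal_mul_liminf_phiFun hgraph hV husc ht)

end SetValued

/-- if `Y` is complete and `y ↦ dist(xb, F⁻¹(y))` is upper semicontinuous
near `yb`, then `S/2 ≤ lopen F (xb,yb) ≤ S`. -/
theorem slope_estimate_lopen {X Y : Type*} [MetricSpace X] [MetricSpace Y]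
    [CompleteSpace Y] (F : X → Set Y) (xb : X) (yb : Y) (hgraph : yb ∈ F xb)
    (husc : ∃ V ∈ 𝓝 yb, UpperSemicontinuousOn
      (fun y : Y => EMetric.infEdist xb {x | y ∈ F x}) V) :
    slopeS F xb yb / 2 ≤ lopenMod F xb yb ∧ lopenMod F xb yb ≤ slopeS F xb yb := by
  obtain ⟨V, hV, husc⟩ := husc
  have hlopen : lopenMod F xb yb = liminf (phiFun F xb yb) (𝓝 yb ⊓ 𝓟 {y | y ∉ F xb}) :=
    le_antisymm (lopenMod_le_liminf_phiFun hgraph) liminf_phiFun_le_lopenMod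
  rw [hlopen]
  exact ⟨ENNReal.div_le_of_le_mul' (slopeS_le_two_mul_liminf_phiFun hgraph hV husc),
    liminf_phiFun_le_slopeS hgraph⟩
end

section
/- If F : X ⇉ Y between normed spaces is semiregular at (x̄,ȳ) ∈ graph F (i.e. lopen F(x̄,ȳ) > 0), then the Fréchet coderivative satisfies D̂*F⁻¹(ȳ,x̄)(0) = {0}; more precisely, lopen F(x̄,ȳ) ≤ inf{‖x*‖ : x* ∈ D̂*F(x̄,ȳ)(y*), y* ∈ Y*, ‖y*‖ = 1}. -/
open Metric Set Filter Topology
open scoped ENNReal NNReal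

/-- Membership in the Fréchet coderivative: `x' ∈ D̂*F(xb,yb)(y')`, i.e.
`(x', -y')` belongs to the Fréchet normal cone to the graph of `F` at `(xb,yb)`. -/
def FrechetCoderivMem {X Y : Type*}
    [NormedAddCommGroup X] [NormedSpace ℝ X] [NormedAddCommGroup Y] [NormedSpace ℝ Y]
    (F : X → Set Y) (xb : X) (yb : Y) (y' : Y →L[ℝ] ℝ) (x' : X →L[ℝ] ℝ) : Prop :=
  ∀ ε > (0:ℝ), ∃ δ > (0:ℝ), ∀ x : X, ∀ y ∈ F x, dist x xb < δ → dist y yb < δ →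
    x' (x - xb) - y' (y - yb) ≤ ε * ‖((x - xb, y - yb) : X × Y)‖


section Aux
variable {X Y : Type*} [NormedAddCommGroup X] [NormedSpace ℝ X]
  [NormedAddCommGroup Y] [NormedSpace ℝ Y]

lemma svimage_point (F : X → Set Y) (xb : X) (yb : Y) {c ε₀ : ℝ} (hc : 0 < c)
    (hopen : ∀ t ∈ Ioo (0:ℝ) ε₀, closedBall yb (c*t) ⊆ SVImage F (closedBall xb t))
    (w : Y) (hw : ‖w‖ ≤ 1) {t : ℝ} (ht : t ∈ Ioo (0:ℝ) ε₀) :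
    ∃ x, dist x xb ≤ t ∧ yb + (c*t)•w ∈ F x := by
  have hmem : yb + (c*t)•w ∈ closedBall yb (c*t) := by
    rw [mem_closedBall, dist_eq_norm]
    have h1 : yb + (c*t)•w - yb = (c*t)•w := by abel
    rw [h1, norm_smul, Real.norm_eq_abs, abs_of_pos (mul_pos hc ht.1)]
    nlinarith [norm_nonneg w, mul_pos hc ht.1]
  obtain ⟨x, hx, hy⟩ := mem_iUnion₂.1 (hopen t ht hmem)
  exact ⟨x, mem_closedBall.1 hx, hy⟩

lemma aux_c_le_norm (F : X → Set Y) (xb : X) (yb : Y) {c ε₀ : ℝ} (hc : 0 < c)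
    (hε₀ : 0 < ε₀)
    (hopen : ∀ t ∈ Ioo (0:ℝ) ε₀, closedBall yb (c*t) ⊆ SVImage F (closedBall xb t))
    (y' : Y →L[ℝ] ℝ) (x' : X →L[ℝ] ℝ) (hy' : ‖y'‖ = 1)
    (hcod : FrechetCoderivMem F xb yb y' x') : c ≤ ‖x'‖ := by
  refine le_of_forall_pos_le_add fun εf hεf => ?_
  have h12 : (0:ℝ) < 1 + 2*c := by linarith
  set η := min (εf/(1+2*c)) (1/2) with hηdef
  have hη : 0 < η := lt_min (by positivity) one_half_pos
  have hηεf : η * (1+2*c) ≤ εf := by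
    have h1 := min_le_left (εf/(1+2*c)) (1/2)
    calc η*(1+2*c) ≤ (εf/(1+2*c))*(1+2*c) := by nlinarith
    _ = εf := div_mul_cancel₀ _ h12.ne'
  have h1η : 1 - η < ‖y'‖ := by rw [hy']; linarith
  obtain ⟨v, hv1, hv2⟩ := y'.exists_lt_apply_of_lt_opNorm h1η
  obtain ⟨w, hw1, hw2⟩ : ∃ w : Y, ‖w‖ ≤ 1 ∧ 1 - η < y' w := by
    rcases le_or_gt 0 (y' v) with h | h
    · exact ⟨v, hv1.le, by rwa [Real.norm_eq_abs, abs_of_nonneg h] at hv2⟩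
    · refine ⟨-v, by rw [norm_neg]; exact hv1.le, ?_⟩
      rw [map_neg]
      rwa [Real.norm_eq_abs, abs_of_neg h] at hv2
  obtain ⟨δ, hδ, H⟩ := hcod η hη
  have hm : 0 < min ε₀ (min δ (δ/c)) := lt_min hε₀ (lt_min hδ (div_pos hδ hc))
  set t := min ε₀ (min δ (δ/c)) / 2 with htdef
  have ht0 : 0 < t := by positivity
  have htε₀ : t < ε₀ := by
    have := min_le_left ε₀ (min δ (δ/c)); simp only [htdef]; linarith
  have htδ : t < δ := by
    have h1 := min_le_right ε₀ (min δ (δ/c))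
    have h2 := min_le_left δ (δ/c); simp only [htdef]; linarith
  have hctδ : c * t < δ := by
    have h1 := min_le_right ε₀ (min δ (δ/c))
    have h2 := min_le_right δ (δ/c)
    have h3 : t < δ/c := by simp only [htdef]; linarith
    calc c * t < c * (δ/c) := by nlinarith
    _ = δ := mul_div_cancel₀ _ hc.ne'
  obtain ⟨x, hx, hy⟩ := svimage_point F xb yb hc hopen (-w)
    (by rw [norm_neg]; exact hw1) ⟨ht0, htε₀⟩
  set y := yb + (c*t)•(-w) with hydef
  have hyyb : y - yb = (c*t)•(-w) := by rw [hydef]; exact add_sub_cancel_left yb _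
  have hdy : dist y yb ≤ c*t := by
    rw [dist_eq_norm, hyyb, norm_smul, norm_neg, Real.norm_eq_abs,
      abs_of_pos (mul_pos hc ht0)]
    nlinarith [mul_pos hc ht0]
  have hnorm : ‖x - xb‖ ≤ t := by rw [← dist_eq_norm]; exact hx
  have key := H x y hy (lt_of_le_of_lt hx htδ) (lt_of_le_of_lt hdy hctδ)
  have e1 : y' (y - yb) = -(c*t * y' w) := by
    rw [hyyb, map_smul, smul_eq_mul, map_neg]; ring
  have e2 : -(‖x'‖ * t) ≤ x' (x - xb) := by
    have h1 : |x' (x - xb)| ≤ ‖x'‖ * t := by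
      calc |x' (x-xb)| = ‖x' (x-xb)‖ := (Real.norm_eq_abs _).symm
      _ ≤ ‖x'‖ * ‖x - xb‖ := x'.le_opNorm _
      _ ≤ ‖x'‖ * t := by nlinarith [norm_nonneg x']
    linarith [(abs_le.1 h1).1]
  have hdyn : ‖y - yb‖ ≤ c*t := by rw [← dist_eq_norm]; exact hdy
  have e3 : ‖((x - xb, y - yb) : X × Y)‖ ≤ t + c*t := by
    simp only [Prod.norm_def]
    exact max_le (by nlinarith [mul_pos hc ht0]) (by linarith)
  have key' : x' (x - xb) + c*t*(y' w) ≤ η*(t + c*t) := by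
    rw [e1] at key
    have h1 : η * ‖((x - xb, y - yb) : X × Y)‖ ≤ η*(t + c*t) :=
      mul_le_mul_of_nonneg_left e3 hη.le
    linarith
  clear key H hcod hopen e1 e3 hy hdyn hdy hyyb
  have hkey2 : c*t*(1-η) ≤ η*(t + c*t) + ‖x'‖*t := by
    nlinarith [mul_nonneg (mul_pos hc ht0).le (by linarith : (0:ℝ) ≤ y' w - (1-η))]
  clear e2 key'
  have hdiv : c*(1-η) ≤ η*(1+c) + ‖x'‖ := by
    have h : t*(c*(1-η)) ≤ t*(η*(1+c) + ‖x'‖) := by linarith [hkey2]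
    exact le_of_mul_le_mul_left h ht0
  linarith [hηεf]

lemma aux_part2 (F : X → Set Y) (xb : X) (yb : Y) {c ε₀ : ℝ} (hc : 0 < c) (hε₀ : 0 < ε₀)
    (hopen : ∀ t ∈ Ioo (0:ℝ) ε₀, closedBall yb (c*t) ⊆ SVImage F (closedBall xb t))
    (y' : Y →L[ℝ] ℝ)
    (hcod : FrechetCoderivMem (fun y : Y => {x : X | y ∈ F x}) yb xb (0 : X →L[ℝ] ℝ) y') :
    y' = 0 := by
  have main : ∀ w : Y, ‖w‖ ≤ 1 → y' w ≤ 0 := by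
    intro w hw
    have h2 : c * y' w ≤ 0 := by
      have h2' : ∀ εf > (0:ℝ), c * y' w ≤ 0 + εf := by
        intro εf hεf
        have h1c : (0:ℝ) < 1 + c := by linarith
        set η := εf / (1+c) with hηdef
        have hη : 0 < η := by positivity
        obtain ⟨δ, hδ, H⟩ := hcod η hη
        have hm : 0 < min ε₀ (min δ (δ/c)) := lt_min hε₀ (lt_min hδ (div_pos hδ hc))
        set t := min ε₀ (min δ (δ/c)) / 2 with htdef
        have ht0 : 0 < t := by positivity
        have htε₀ : t < ε₀ := by
          have := min_le_left ε₀ (min δ (δ/c)); simp only [htdef]; linarith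
        have htδ : t < δ := by
          have h1 := min_le_right ε₀ (min δ (δ/c))
          have h2 := min_le_left δ (δ/c); simp only [htdef]; linarith
        have hctδ : c * t < δ := by
          have h1 := min_le_right ε₀ (min δ (δ/c))
          have h2 := min_le_right δ (δ/c)
          have h3 : t < δ/c := by simp only [htdef]; linarith
          calc c * t < c * (δ/c) := by nlinarith
          _ = δ := mul_div_cancel₀ _ hc.ne'
        obtain ⟨x, hx, hy⟩ := svimage_point F xb yb hc hopen w hw ⟨ht0, htε₀⟩
        set yv := yb + (c*t)•w with hyvdef
        have hyyb : yv - yb = (c*t)•w := by rw [hyvdef]; exact add_sub_cancel_left yb _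
        have hdy : dist yv yb ≤ c*t := by
          rw [dist_eq_norm, hyyb, norm_smul, Real.norm_eq_abs,
            abs_of_pos (mul_pos hc ht0)]
          nlinarith [mul_pos hc ht0]
        have key := H yv x hy (lt_of_le_of_lt hdy hctδ) (lt_of_le_of_lt hx htδ)
        have e1 : y' (yv - yb) = c*t * y' w := by
          rw [hyyb, map_smul, smul_eq_mul]
        have hnx : ‖x - xb‖ ≤ t := by rw [← dist_eq_norm]; exact hx
        have hdyn : ‖yv - yb‖ ≤ c*t := by rw [← dist_eq_norm]; exact hdy
        have e3 : ‖((yv - yb, x - xb) : Y × X)‖ ≤ c*t + t := by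
          simp only [Prod.norm_def]
          exact max_le (by linarith) (by nlinarith [mul_pos hc ht0])
        simp only [ContinuousLinearMap.zero_apply, sub_zero, e1] at key
        have h4 : η * ‖((yv - yb, x - xb) : Y × X)‖ ≤ η*(c*t + t) :=
          mul_le_mul_of_nonneg_left e3 hη.le
        have h5 : c*t*(y' w) ≤ η*(c*t + t) := by linarith
        clear H hcod hopen hy
        have h6 : t*(c*(y' w)) ≤ t*(η*(1+c)) := by linarith [h5]
        have h7 : c * y' w ≤ η*(1+c) := le_of_mul_le_mul_left h6 ht0
        have h8 : η*(1+c) = εf := div_mul_cancel₀ _ h1c.ne'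
        linarith
      by_contra hcon
      push_neg at hcon
      obtain h := h2' ((c * y' w)/2) (by linarith)
      linarith
    nlinarith
  ext v
  simp only [ContinuousLinearMap.zero_apply]
  have hpos : (0:ℝ) < ‖v‖ + 1 := by positivity
  have hwle : ∀ u : Y, ‖u‖ ≤ ‖v‖ → ‖(‖v‖+1)⁻¹ • u‖ ≤ 1 := by
    intro u hu
    rw [norm_smul, norm_inv, Real.norm_eq_abs, abs_of_pos hpos]
    have h1 : (‖v‖+1)⁻¹ * ‖u‖ ≤ (‖v‖+1)⁻¹ * (‖v‖+1) := by
      apply mul_le_mul_of_nonneg_left _ (by positivity)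
      linarith
    rw [inv_mul_cancel₀ hpos.ne'] at h1
    exact h1
  have h1 := main ((‖v‖+1)⁻¹ • v) (hwle v le_rfl)
  have h2 := main ((‖v‖+1)⁻¹ • (-v)) (hwle (-v) (by rw [norm_neg]))
  rw [map_smul, smul_eq_mul] at h1
  rw [map_smul, smul_eq_mul, map_neg] at h2
  have hinv : (0:ℝ) < (‖v‖+1)⁻¹ := by positivity
  nlinarith
end Aux

/-- dual necessary condition for semiregularity:
`lopen F (xb,yb) ≤ inf{‖x'‖ : x' ∈ D̂*F(xb,yb)(y'), ‖y'‖ = 1}`; in particular, if `F` is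
semiregular at `(xb,yb)` then `D̂*F⁻¹(yb,xb)(0) = {0}`. -/
theorem lopen_le_coderivative_inf {X Y : Type*}
    [NormedAddCommGroup X] [NormedSpace ℝ X] [NormedAddCommGroup Y] [NormedSpace ℝ Y]
    (F : X → Set Y) (xb : X) (yb : Y) (hgraph : yb ∈ F xb) :
    lopenMod F xb yb ≤
      sInf (ENNReal.ofReal '' {r : ℝ | ∃ y' : Y →L[ℝ] ℝ, ∃ x' : X →L[ℝ] ℝ,
        ‖y'‖ = 1 ∧ FrechetCoderivMem F xb yb y' x' ∧ r = ‖x'‖}) ∧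
    (0 < lopenMod F xb yb →
      ∀ y' : Y →L[ℝ] ℝ,
        FrechetCoderivMem (fun y : Y => {x : X | y ∈ F x}) yb xb (0 : X →L[ℝ] ℝ) y' →
        y' = 0) := by
  constructor
  · refine sSup_le fun a ha => le_sInf fun b hb => ?_
    obtain ⟨c, ⟨hc, ε₀, hε₀, hopen⟩, rfl⟩ := ha
    obtain ⟨r, ⟨y', x', hy', hcod, rfl⟩, rfl⟩ := hb
    exact ENNReal.ofReal_le_ofReal (aux_c_le_norm F xb yb hc hε₀ hopen y' x' hy' hcod)
  · intro hpos y' hcod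
    rw [lopenMod, lt_sSup_iff] at hpos
    obtain ⟨b, hb, -⟩ := hpos
    obtain ⟨c, ⟨hc, ε₀, hε₀, hopen⟩, rfl⟩ := hb
    exact aux_part2 F xb yb hc hε₀ hopen y' hcod
end

section
/- Let (X,d) be complete, (Y,ρ) a metric space, x̄ ∈ X, g : X → Y continuous on all of X, and c, r > 0. Suppose that for every x ∈ B(x̄,r) and every y ∈ B(g(x̄),cr) satisfying 0 < ρ(g(x),y) ≤ ρ(g(x̄),y) − c·d(x,x̄), there exists x' ∈ X with ρ(g(x'),y) < ρ(g(x),y) − c·d(x,x'). Then g(B(x̄,t)) ⊇ B(g(x̄),ct) for every t ∈ (0,r). -/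
open Metric Set Filter Topology
open scoped ENNReal NNReal

/-- Ekeland variational principle (strong form) for a continuous nonnegative function. -/
theorem ekeland_aux {X : Type*} [MetricSpace X] [CompleteSpace X]
    (f : X → ℝ) (hf : Continuous f) (hf0 : ∀ x, 0 ≤ f x) (c : ℝ) (hc : 0 < c) (x0 : X) :
    ∃ z : X, f z + c * dist z x0 ≤ f x0 ∧ ∀ x, f z ≤ f x + c * dist x z := by
  set S : X → Set X := fun x => {w | f w + c * dist w x ≤ f x} with hS
  have hself : ∀ x, x ∈ S x := by
    intro x; simp [hS]
  have hne : ∀ x, (f '' S x).Nonempty := fun x => ⟨f x, x, hself x, rfl⟩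
  have hbdd : ∀ x, BddBelow (f '' S x) := by
    intro x; exact ⟨0, by rintro a ⟨w, _, rfl⟩; exact hf0 w⟩
  have key : ∀ x : X, ∀ n : ℕ, ∃ w, w ∈ S x ∧ f w < sInf (f '' S x) + (1/2)^n := by
    intro x n
    have h : sInf (f '' S x) < sInf (f '' S x) + (1/2)^n := by
      have : (0:ℝ) < (1/2)^n := by positivity
      linarith
    obtain ⟨a, ⟨w, hw, rfl⟩, ha⟩ := exists_lt_of_csInf_lt (hne x) h
    exact ⟨w, hw, ha⟩
  -- the iterated sequence
  let u : ℕ → X := fun n => Nat.rec x0 (fun n x => (key x n).choose) n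
  have hu0 : u 0 = x0 := rfl
  have huS : ∀ n, u (n + 1) ∈ S (u n) := fun n => (key (u n) n).choose_spec.1
  have huInf : ∀ n, f (u (n + 1)) < sInf (f '' S (u n)) + (1/2)^n :=
    fun n => (key (u n) n).choose_spec.2
  have htrans : ∀ ⦃a b w : X⦄, w ∈ S b → b ∈ S a → w ∈ S a := by
    intro a b w hw hb
    have := dist_triangle w b a
    simp only [hS, Set.mem_setOf_eq] at *
    nlinarith [hc]
  have hchain : ∀ n m, n ≤ m → u m ∈ S (u n) := by
    intro n m hnm
    induction m with
    | zero => simpa [Nat.le_zero.mp hnm] using hself (u 0)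
    | succ m ih =>
      rcases Nat.lt_or_ge n (m+1) with h | h
      · exact htrans (huS m) (ih (Nat.lt_succ_iff.mp h))
      · have : n = m + 1 := le_antisymm hnm h
        simpa [this] using hself (u (m+1))
  have hanti : ∀ n m, n ≤ m → f (u m) ≤ f (u n) := by
    intro n m hnm
    have := hchain n m hnm
    simp only [hS, Set.mem_setOf_eq] at this
    nlinarith [dist_nonneg (x := u m) (y := u n)]
  -- limit of f (u n)
  set L : ℝ := ⨅ n, f (u n) with hL
  have hbdd' : BddBelow (Set.range fun n => f (u n)) := ⟨0, by rintro a ⟨n, rfl⟩; exact hf0 _⟩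
  have hLtend : Filter.Tendsto (fun n => f (u n)) Filter.atTop (nhds L) :=
    tendsto_atTop_ciInf (fun a b hab => hanti a b hab) hbdd'
  have hLle : ∀ n, L ≤ f (u n) := fun n => ciInf_le hbdd' n
  -- Cauchy
  have hdist : ∀ n m, n ≤ m → c * dist (u m) (u n) ≤ f (u n) - f (u m) := by
    intro n m hnm
    have := hchain n m hnm
    simp only [hS, Set.mem_setOf_eq] at this
    linarith
  have hcauchy : CauchySeq u := by
    refine cauchySeq_of_le_tendsto_0 (fun N => (f (u N) - L) / c) ?_ ?_
    · intro n m N hn hm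
      rcases le_total n m with h | h
      · have h1 := hdist n m h
        have h2 := hanti N n hn
        have h3 := hLle m
        rw [dist_comm, le_div_iff₀ hc]
        nlinarith
      · have h1 := hdist m n h
        have h2 := hanti N m hm
        have h3 := hLle n
        rw [le_div_iff₀ hc]
        nlinarith
    · have : Filter.Tendsto (fun N => (f (u N) - L) / c) Filter.atTop (nhds ((L - L) / c)) :=
        (hLtend.sub tendsto_const_nhds).div_const c
      simpa using this
  obtain ⟨z, hz⟩ := cauchySeq_tendsto_of_complete hcauchy
  -- z belongs to every S (u n)
  have hzS : ∀ n, f z + c * dist z (u n) ≤ f (u n) := by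
    intro n
    have h1 : Filter.Tendsto (fun m => f (u m) + c * dist (u m) (u n)) Filter.atTop
        (nhds (f z + c * dist z (u n))) :=
      ((hf.continuousAt.tendsto.comp hz).add
        (((continuous_id.dist continuous_const).continuousAt.tendsto.comp hz).const_mul c))
    refine le_of_tendsto h1 ?_
    filter_upwards [Filter.eventually_ge_atTop n] with m hm
    have := hchain n m hm
    simpa only [hS, Set.mem_setOf_eq] using this
  have hzL : f z ≤ L := by
    refine le_ciInf fun n => ?_
    have := hzS n
    nlinarith [dist_nonneg (x := z) (y := u n)]
  refine ⟨z, by simpa [hu0] using hzS 0, ?_⟩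
  intro x
  by_contra hx
  push_neg at hx
  -- x ∈ S (u n) for every n
  have hxS : ∀ n, x ∈ S (u n) := by
    intro n
    have h1 := hzS n
    have h2 := dist_triangle x z (u n)
    simp only [hS, Set.mem_setOf_eq]
    nlinarith
  have hxL : L ≤ f x := by
    have h1 : ∀ n, f (u (n + 1)) - (1/2)^n ≤ f x := by
      intro n
      have h2 : sInf (f '' S (u n)) ≤ f x := csInf_le (hbdd _) ⟨x, hxS n, rfl⟩
      have := huInf n
      linarith
    have h3 : Filter.Tendsto (fun n : ℕ => f (u (n + 1)) - (1/2:ℝ)^n) Filter.atTop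
        (nhds (L - 0)) :=
      (hLtend.comp (Filter.tendsto_add_atTop_nat 1)).sub
        (tendsto_pow_atTop_nhds_zero_of_lt_one (by norm_num) (by norm_num))
    exact le_of_tendsto (by simpa using h3) (Filter.Eventually.of_forall h1)
  nlinarith [mul_nonneg hc.le (dist_nonneg (x := x) (y := z))]

/-- Ekeland-type sufficient criterion for pointwise linear openness of a
continuous single-valued mapping. -/
theorem openness_of_decrease_condition {X Y : Type*} [MetricSpace X] [CompleteSpace X]
    [MetricSpace Y] (xb : X) (g : X → Y) (hg : Continuous g) (c r : ℝ)
    (hc : 0 < c) (hr : 0 < r)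
    (H : ∀ x ∈ ball xb r, ∀ y ∈ ball (g xb) (c * r),
      (0 < dist (g x) y ∧ dist (g x) y ≤ dist (g xb) y - c * dist x xb) →
      ∃ x' : X, dist (g x') y < dist (g x) y - c * dist x x') :
    ∀ t ∈ Ioo (0:ℝ) r, ball (g xb) (c * t) ⊆ g '' ball xb t := by
  rintro t ⟨ht0, htr⟩ y hy
  rw [mem_ball] at hy
  set f : X → ℝ := fun x => dist (g x) y with hf
  have hfc : Continuous f := (hg.dist continuous_const)
  obtain ⟨z, hz1, hz2⟩ := ekeland_aux f hfc (fun x => dist_nonneg) c hc xb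
  have hfxb : f xb = dist (g xb) y := rfl
  have hyd : dist (g xb) y < c * t := by rwa [dist_comm] at hy
  have hzb : dist z xb < t := by
    have h1 : c * dist z xb ≤ f xb := by
      nlinarith [dist_nonneg (x := g z) (y := y)]
    have : c * dist z xb < c * t := lt_of_le_of_lt h1 (by rwa [hfxb])
    exact lt_of_mul_lt_mul_left this hc.le
  have hgz : g z = y := by
    by_contra hne
    have hpos : 0 < f z := dist_pos.mpr hne
    obtain ⟨x', hx'⟩ := H z (mem_ball.mpr (hzb.trans htr)) y
      (mem_ball.mpr (by rw [dist_comm]; calc dist (g xb) y < c * t := hyd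
        _ ≤ c * r := by nlinarith))
      ⟨hpos, by rw [← hfxb]; linarith⟩
    have h2 := hz2 x'
    rw [dist_comm x' z] at h2
    linarith
  exact ⟨z, mem_ball.mpr hzb, hgz⟩
end

section
/- Let (X,d) be complete, (Y,ρ) a metric space, g : X → Y continuous, and c, r > 0 such that g(B(x̄,t)) ⊇ B(g(x̄),ct) for all t ∈ (0,r). Then for every c' ∈ (0,c), every x ∈ B(x̄,r) and every y ∈ B(g(x̄),c'r) satisfying 0 < ρ(g(x̄),y) ≤ ρ(g(x),y) − c'·d(x,x̄), there is x' ∈ X with ρ(g(x'),y) < ρ(g(x),y) − c'·d(x,x'). -/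
open Metric Set Filter Topology
open scoped ENNReal NNReal

/-- necessary counterpart of the Ekeland-type criterion: if
`g(B(xb,t)) ⊇ B(g(xb),ct)` for all `t ∈ (0,r)`, then the decrease condition holds with
any constant `c' ∈ (0,c)`. -/
theorem decrease_condition_of_openness {X Y : Type*} [MetricSpace X] [CompleteSpace X]
    [MetricSpace Y] (xb : X) (g : X → Y) (hg : Continuous g) (c r : ℝ)
    (hc : 0 < c) (hr : 0 < r)
    (H : ∀ t ∈ Ioo (0:ℝ) r, ball (g xb) (c * t) ⊆ g '' ball xb t) :
    ∀ c' ∈ Ioo (0:ℝ) c, ∀ x ∈ ball xb r, ∀ y ∈ ball (g xb) (c' * r),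
      (0 < dist (g xb) y ∧ dist (g xb) y ≤ dist (g x) y - c' * dist x xb) →
      ∃ x' : X, dist (g x') y < dist (g x) y - c' * dist x x' := by
  rintro c' ⟨hc'0, hc'c⟩ x hx y hy ⟨hρ0, hρ⟩
  set ρ := dist (g xb) y with hρdef
  set t := (ρ / c + ρ / c') / 2 with ht
  have h1 : ρ / c < ρ / c' := by
    apply div_lt_div_of_pos_left hρ0 hc'0 hc'c
  have htlow : ρ / c < t := by simp [ht]; linarith
  have hthigh : t < ρ / c' := by simp [ht]; linarith
  have ht0 : 0 < t := lt_trans (div_pos hρ0 hc) htlow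
  have htr : t < r := by
    have : ρ / c' < r := by
      rw [div_lt_iff₀ hc'0]
      rw [mem_ball, dist_comm] at hy
      linarith [hy]
    linarith
  have hymem : y ∈ ball (g xb) (c * t) := by
    rw [mem_ball, dist_comm]
    calc ρ = c * (ρ / c) := by field_simp
    _ < c * t := by exact mul_lt_mul_of_pos_left htlow hc
  obtain ⟨x', hx', hgx'⟩ := H t ⟨ht0, htr⟩ hymem
  refine ⟨x', ?_⟩
  rw [hgx', dist_self]
  have hd : dist x x' ≤ dist x xb + dist xb x' := dist_triangle x xb x'
  have hbx' : dist xb x' < t := by rw [mem_ball, dist_comm] at hx'; exact hx'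
  have : c' * t < ρ := by
    rw [← lt_div_iff₀' hc'0]; exact hthigh
  nlinarith [dist_nonneg (x := x) (y := xb)]
end

section
/- Let (X,d) and (Y,ρ) be metric spaces, F : X ⇉ Y with ȳ ∈ F(x̄), and let c, r, α > 0 satisfy αc < 1 and suppose graph F ∩ (B[x̄,r] × B[ȳ,r/α]) is complete. Assume that for every x ∈ B(x̄,r), every v ∈ B(ȳ,r/α) ∩ F(x), and every y ∈ B(ȳ,cr) with 0 < ρ(v,y) ≤ ρ(ȳ,y) − c·max{d(x,x̄), α·ρ(v,ȳ)}, there exists (x',v') ∈ graph F with ρ(v',y) < ρ(v,y) − c·max{d(x,x'), α·ρ(v,v')}. Then F(B(x̄,t)) ⊇ B(ȳ,ct) for every t ∈ (0,r). -/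
open Metric Set Filter Topology
open scoped ENNReal NNReal

set_option maxHeartbeats 2000000 in
/-- set-valued Ekeland-type sufficient criterion for pointwise linear
openness (Proposition 4.2(i) of the paper). Completeness of the localized graph is with
respect to the (bi-Lipschitz equivalent) product metric. -/
theorem sv_openness_of_decrease_condition {X Y : Type*} [MetricSpace X] [MetricSpace Y]
    (F : X → Set Y) (xb : X) (yb : Y) (hgraph : yb ∈ F xb) (c r α : ℝ)
    (hc : 0 < c) (hr : 0 < r) (hα : 0 < α) (hαc : α * c < 1)
    (hcomplete : IsComplete ({p : X × Y | p.2 ∈ F p.1} ∩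
      closedBall xb r ×ˢ closedBall yb (r / α)))
    (H : ∀ x ∈ ball xb r, ∀ v ∈ ball yb (r / α) ∩ F x, ∀ y ∈ ball yb (c * r),
      (0 < dist v y ∧
        dist v y ≤ dist yb y - c * max (dist x xb) (α * dist v yb)) →
      ∃ x' : X, ∃ v' ∈ F x',
        dist v' y < dist v y - c * max (dist x x') (α * dist v v')) :
    ∀ t ∈ Ioo (0:ℝ) r, ball yb (c * t) ⊆ SVImage F (ball xb t) := by
  intro t ht y hy
  set S : Set (X × Y) := {p : X × Y | p.2 ∈ F p.1} ∩
      closedBall xb r ×ˢ closedBall yb (r / α) with hSdef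
  set M : X × Y → X × Y → ℝ := fun p q => max (dist p.1 q.1) (α * dist p.2 q.2) with hMdef
  have hM0 : ∀ p q, 0 ≤ M p q := fun p q => le_trans dist_nonneg (le_max_left _ _)
  have hMself : ∀ p, M p p = 0 := by
    intro p; simp [hMdef, dist_self]
  have hMtri : ∀ p q s, M p s ≤ M p q + M q s := by
    intro p q s
    refine max_le ?_ ?_
    · exact le_trans (dist_triangle _ _ _)
        (add_le_add (le_max_left _ _) (le_max_left _ _))
    · calc α * dist p.2 s.2 ≤ α * (dist p.2 q.2 + dist q.2 s.2) := by
            have := dist_triangle p.2 q.2 s.2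
            nlinarith
        _ = α * dist p.2 q.2 + α * dist q.2 s.2 := by ring
        _ ≤ M p q + M q s := add_le_add (le_max_right _ _) (le_max_right _ _)
  set Dec : X × Y → X × Y → Prop :=
    fun p q => q ∈ S ∧ dist q.2 y ≤ dist p.2 y - c * M p q with hDecdef
  have hDecRefl : ∀ p, p ∈ S → Dec p p := by
    intro p hp; exact ⟨hp, by rw [hMself]; simp⟩
  have hDecTrans : ∀ p q s, Dec p q → Dec q s → Dec p s := by
    rintro p q s ⟨hqS, hq⟩ ⟨hsS, hs⟩
    refine ⟨hsS, ?_⟩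
    have := hMtri p q s
    nlinarith
  -- the near-infimizing descent step
  have step : ∀ (n : ℕ) (p : X × Y), ∃ q : X × Y, p ∈ S →
      Dec p q ∧ dist q.2 y ≤
        sInf ((fun q : X × Y => dist q.2 y) '' {q | Dec p q}) + (1/2 : ℝ)^n := by
    intro n p
    by_cases hp : p ∈ S
    · have hne : ((fun q : X × Y => dist q.2 y) '' {q | Dec p q}).Nonempty :=
        ⟨dist p.2 y, ⟨p, hDecRefl p hp, rfl⟩⟩
      obtain ⟨d, ⟨q, hq, rfl⟩, hd⟩ :=
        Real.lt_sInf_add_pos hne (by positivity : (0:ℝ) < (1/2:ℝ)^n)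
      exact ⟨q, fun _ => ⟨hq, hd.le⟩⟩
    · exact ⟨p, fun h => absurd h hp⟩
  choose f hf using step
  let u : ℕ → X × Y := fun n => Nat.rec (xb, yb) (fun k pk => f k pk) n
  have hu0 : u 0 = (xb, yb) := rfl
  have husucc : ∀ n, u (n+1) = f n (u n) := fun n => rfl
  have hS0 : ((xb, yb) : X × Y) ∈ S :=
    ⟨hgraph, mem_closedBall_self hr.le, mem_closedBall_self (by positivity)⟩
  have huS : ∀ n, u n ∈ S := by
    intro n; induction n with
    | zero => exact hS0
    | succ n ih => rw [husucc]; exact ((hf n (u n)) ih).1.1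
  have hDecSucc : ∀ n, Dec (u n) (u (n+1)) := by
    intro n; rw [husucc]; exact ((hf n (u n)) (huS n)).1
  have hbddBelow : ∀ p : X × Y, BddBelow ((fun q : X × Y => dist q.2 y) '' {q | Dec p q}) := by
    intro p; exact ⟨0, by rintro d ⟨q, _, rfl⟩; exact dist_nonneg⟩
  have hnear : ∀ n q, Dec (u n) q → dist (u (n+1)).2 y ≤ dist q.2 y + (1/2:ℝ)^n := by
    intro n q hq
    have h1 : dist (u (n+1)).2 y ≤
        sInf ((fun q : X × Y => dist q.2 y) '' {q | Dec (u n) q}) + (1/2:ℝ)^n := by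
      rw [husucc]; exact ((hf n (u n)) (huS n)).2
    have h2 : sInf ((fun q : X × Y => dist q.2 y) '' {q | Dec (u n) q}) ≤ dist q.2 y :=
      csInf_le (hbddBelow (u n)) ⟨q, hq, rfl⟩
    linarith
  have hchain : ∀ n m, n ≤ m → Dec (u n) (u m) := by
    intro n m hnm
    induction m, hnm using Nat.le_induction with
    | base => exact hDecRefl _ (huS n)
    | succ m _ ih => exact hDecTrans _ _ _ ih (hDecSucc m)
  set a : ℕ → ℝ := fun n => dist (u n).2 y with hadef
  have hanti : Antitone a := by
    refine antitone_nat_of_succ_le fun n => ?_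
    have h := (hDecSucc n).2
    have := hM0 (u n) (u (n+1))
    nlinarith
  have habdd : BddBelow (range a) := ⟨0, by rintro d ⟨n, rfl⟩; exact dist_nonneg⟩
  set L : ℝ := ⨅ n, a n with hLdef
  have hLa : Tendsto a atTop (𝓝 L) := tendsto_atTop_ciInf hanti habdd
  have hL0 : 0 ≤ L := le_ciInf fun n => dist_nonneg
  have hLle : ∀ n, L ≤ a n := fun n => ciInf_le habdd n
  -- Cauchy
  set β : ℝ := min 1 α with hβdef
  have hβ : 0 < β := lt_min one_pos hα
  have hβd : ∀ p q : X × Y, β * dist p q ≤ M p q := by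
    intro p q
    rw [Prod.dist_eq]
    rcases max_cases (dist p.1 q.1) (dist p.2 q.2) with ⟨h, _⟩ | ⟨h, _⟩ <;> rw [h]
    · calc β * dist p.1 q.1 ≤ 1 * dist p.1 q.1 := by
            have : β ≤ 1 := min_le_left _ _
            nlinarith [dist_nonneg (x := p.1) (y := q.1)]
        _ = dist p.1 q.1 := one_mul _
        _ ≤ M p q := le_max_left _ _
    · calc β * dist p.2 q.2 ≤ α * dist p.2 q.2 := by
            have : β ≤ α := min_le_right _ _
            nlinarith [dist_nonneg (x := p.2) (y := q.2)]
        _ ≤ M p q := le_max_right _ _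
  have hkey : ∀ n m, n ≤ m → c * M (u n) (u m) ≤ a n - a m := by
    intro n m h; have := (hchain n m h).2; simp only [hadef]; linarith
  have hdistb : ∀ n m, n ≤ m → dist (u n) (u m) ≤ (a n - a m) / (c * β) := by
    intro n m h
    rw [le_div_iff₀ (by positivity)]
    calc dist (u n) (u m) * (c * β) = c * (β * dist (u n) (u m)) := by ring
      _ ≤ c * M (u n) (u m) := by
          have := hβd (u n) (u m); nlinarith
      _ ≤ a n - a m := hkey n m h
  have hcauchy : CauchySeq u := by
    refine cauchySeq_of_le_tendsto_0 (fun N => (a N - L) / (c * β)) ?_ ?_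
    · have key : ∀ n m N, N ≤ n → n ≤ m →
          dist (u n) (u m) ≤ (a N - L) / (c * β) := by
        intro n m N hN h
        calc dist (u n) (u m) ≤ (a n - a m) / (c * β) := hdistb n m h
          _ ≤ (a N - L) / (c * β) := by
              apply (div_le_div_iff_of_pos_right (by positivity)).mpr
              have h1 : a n ≤ a N := hanti hN
              have h2 : L ≤ a m := hLle m
              linarith
      intro n m N hn hm
      rcases le_total n m with h | h
      · exact key n m N hn h
      · rw [dist_comm]; exact key m n N hm h
    · have h1 : Tendsto (fun N => a N - L) atTop (𝓝 0) := by
        have := hLa.sub (tendsto_const_nhds (x := L))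
        simpa using this
      simpa using h1.div_const (c * β)
  obtain ⟨pbar, hpbarS, hlim⟩ := cauchySeq_tendsto_of_isComplete hcomplete huS hcauchy
  have hlim1 : Tendsto (fun m => (u m).1) atTop (𝓝 pbar.1) :=
    (continuous_fst.tendsto pbar).comp hlim
  have hlim2 : Tendsto (fun m => (u m).2) atTop (𝓝 pbar.2) :=
    (continuous_snd.tendsto pbar).comp hlim
  have hpbar2 : dist pbar.2 y = L :=
    tendsto_nhds_unique (hlim2.dist tendsto_const_nhds) hLa
  have hDecbar : ∀ n, Dec (u n) pbar := by
    intro n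
    refine ⟨hpbarS, ?_⟩
    have h1 : Tendsto (fun m => dist (u m).2 y) atTop (𝓝 (dist pbar.2 y)) :=
      hlim2.dist tendsto_const_nhds
    have h2 : Tendsto (fun m => dist (u n).2 y - c * M (u n) (u m)) atTop
        (𝓝 (dist (u n).2 y - c * M (u n) pbar)) := by
      refine tendsto_const_nhds.sub (Tendsto.const_mul c ?_)
      exact (tendsto_const_nhds.dist hlim1).max ((tendsto_const_nhds.dist hlim2).const_mul α)
    refine le_of_tendsto_of_tendsto h1 h2 ?_
    filter_upwards [eventually_ge_atTop n] with m hm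
    exact (hchain n m hm).2
  have hyyb : dist y yb < c * t := mem_ball.mp hy
  have hDec0 := (hDecbar 0).2
  rw [hu0] at hDec0
  have hDec0' : dist pbar.2 y ≤ dist yb y -
      c * max (dist xb pbar.1) (α * dist yb pbar.2) := hDec0
  have hdyby : dist yb y < c * t := by rw [dist_comm]; exact hyyb
  have hcd1 : c * dist xb pbar.1 ≤ dist yb y - dist pbar.2 y := by
    have h1 : dist xb pbar.1 ≤ max (dist xb pbar.1) (α * dist yb pbar.2) := le_max_left _ _
    nlinarith
  have hcd2 : c * (α * dist yb pbar.2) ≤ dist yb y - dist pbar.2 y := by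
    have h1 : α * dist yb pbar.2 ≤ max (dist xb pbar.1) (α * dist yb pbar.2) := le_max_right _ _
    nlinarith
  have hdnn : 0 ≤ dist pbar.2 y := dist_nonneg
  have htr : t < r := ht.2
  have ht0 : 0 < t := ht.1
  -- L = 0
  have hLzero : L = 0 := by
    by_contra hne
    have hLpos : 0 < L := lt_of_le_of_ne hL0 (Ne.symm hne)
    have hdpos : 0 < dist pbar.2 y := by rw [hpbar2]; exact hLpos
    have hx1 : pbar.1 ∈ ball xb r := by
      rw [mem_ball, dist_comm]
      have : c * dist xb pbar.1 < c * r := by nlinarith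
      exact lt_of_mul_lt_mul_left this hc.le
    have hv1 : pbar.2 ∈ ball yb (r / α) := by
      rw [mem_ball, dist_comm, lt_div_iff₀ hα, mul_comm]
      have : c * (α * dist yb pbar.2) < c * r := by nlinarith
      exact lt_of_mul_lt_mul_left this hc.le
    have hyball : y ∈ ball yb (c * r) := by
      rw [mem_ball]; nlinarith
    obtain ⟨x', v', hv'F, hlt⟩ := H pbar.1 hx1 pbar.2 ⟨hv1, hpbarS.1⟩ y hyball
      ⟨hdpos, by rw [dist_comm pbar.1 xb, dist_comm pbar.2 yb]; exact hDec0'⟩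
    set q : X × Y := (x', v') with hqdef
    have hMq : M pbar q = max (dist pbar.1 x') (α * dist pbar.2 v') := rfl
    have hMq0 : 0 ≤ M pbar q := hM0 _ _
    have hlt' : dist v' y < dist pbar.2 y - c * M pbar q := by rw [hMq]; exact hlt
    have hdv'nn : 0 ≤ dist v' y := dist_nonneg
    have hcM1 : c * dist pbar.1 x' ≤ c * M pbar q := by
      have := le_max_left (dist pbar.1 x') (α * dist pbar.2 v'); rw [hMq]; nlinarith
    have hcM2 : c * (α * dist pbar.2 v') ≤ c * M pbar q := by
      have := le_max_right (dist pbar.1 x') (α * dist pbar.2 v'); rw [hMq]; nlinarith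
    have hqS : q ∈ S := by
      refine ⟨hv'F, ?_, ?_⟩
      · rw [mem_closedBall]
        have htr1 : dist x' xb ≤ dist x' pbar.1 + dist pbar.1 xb := dist_triangle _ _ _
        have hcc : c * dist x' xb < c * r := by
          rw [dist_comm x' pbar.1] at htr1
          rw [dist_comm xb pbar.1] at hcd1
          nlinarith
        exact (lt_of_mul_lt_mul_left hcc hc.le).le
      · rw [mem_closedBall]
        have htr2 : dist v' yb ≤ dist v' pbar.2 + dist pbar.2 yb := dist_triangle _ _ _
        have hca : c * (α * dist v' yb) < c * t := by
          rw [dist_comm v' pbar.2] at htr2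
          rw [dist_comm yb pbar.2] at hcd2
          nlinarith [mul_le_mul_of_nonneg_left htr2 (mul_nonneg hc.le hα.le)]
        have : α * dist v' yb < t := lt_of_mul_lt_mul_left hca hc.le
        rw [le_div_iff₀ hα, mul_comm]
        nlinarith
    have hDecq : Dec pbar q := ⟨hqS, hlt'.le⟩
    have hge : L ≤ dist v' y := by
      have hb : ∀ n : ℕ, L ≤ dist v' y + (1/2:ℝ)^n := by
        intro n
        have h1 := hnear n q (hDecTrans _ _ _ (hDecbar n) hDecq)
        have h2 := hLle (n+1)
        simp only [hadef] at h2
        calc L ≤ dist (u (n+1)).2 y := h2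
          _ ≤ dist q.2 y + (1/2:ℝ)^n := h1
          _ = dist v' y + (1/2:ℝ)^n := rfl
      have htend : Tendsto (fun n : ℕ => dist v' y + (1/2:ℝ)^n) atTop (𝓝 (dist v' y)) := by
        have h0 : Tendsto (fun n : ℕ => ((1:ℝ)/2)^n) atTop (𝓝 0) :=
          tendsto_pow_atTop_nhds_zero_of_lt_one (by norm_num) (by norm_num)
        simpa using tendsto_const_nhds.add h0
      exact ge_of_tendsto htend (Eventually.of_forall hb)
    rw [hpbar2] at hlt'
    nlinarith
  -- conclusion
  have hdzero : dist pbar.2 y = 0 := by rw [hpbar2, hLzero]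
  have hveq : pbar.2 = y := eq_of_dist_eq_zero hdzero
  have hxt : dist pbar.1 xb < t := by
    rw [dist_comm]
    have : c * dist xb pbar.1 < c * t := by nlinarith
    exact lt_of_mul_lt_mul_left this hc.le
  have hyF : y ∈ F pbar.1 := hveq ▸ hpbarS.1
  simp only [SVImage, mem_iUnion]
  exact ⟨pbar.1, mem_ball.mpr hxt, hyF⟩
end

section
/- Let (X,d) be a complete metric space and (Y,ρ) a complete linear metric space with shift-invariant metric. Let F, G : X ⇉ Y with (ȳ,z̄) ∈ F(x̄) × G(x̄), and let c', r > 0 and 0 < ℓ < c' be such that graph F ∩ (B[x̄,2r]×B[ȳ,2c'r]) and graph G ∩ (B[x̄,2r]×B[z̄,2ℓr]) are closed, B(v,c'τ) ⊆ F(B(x,τ)) whenever x ∈ B(x̄,r), v ∈ F(x)∩B(ȳ,c'r), τ ∈ (0,r), and G(x)∩B(z̄,ℓr) ⊆ G(x') + ℓ·d(x,x')·B_Y for all x,x' ∈ B(x̄,2r). Then (F+G)(B(x̄,t)) ⊇ B(ȳ+z̄, (c−ℓ)t) for every c ∈ (ℓ,c') and every t ∈ (0,r). -/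
open Metric Set Filter Topology
open scoped ENNReal NNReal Pointwise

/-!
A Lyusternik–Graves iteration. Put `q = ℓ / c'`, fix `T < r` and a target `y` with
`d(y, yb + zb) < (c' - ℓ) T`. Given `v ∈ F x` and `z ∈ G x` with `d(y - z, v) < (c' - ℓ) β`,
openness of `F` at `(x, v)` yields `x'` with `d(x, x') < (1 - q) β` and `y - z ∈ F x'`, and the
Aubin property of `G` yields `z' ∈ G x'` with `d(z, z') ≤ ℓ d(x, x') < (c' - ℓ) q β`. So the
residual is again controlled, with the budget `β` replaced by `q β`. Starting from `β = T`, the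
iterates form Cauchy sequences staying in the balls where the graphs are closed, and the limit
`x̂ ∈ closedBall xb T` satisfies `y ∈ F x̂ + G x̂`. For `c < c'`, the radius `(c - ℓ) t` equals
`(c' - ℓ) T` with `T < t`.
-/

theorem exists_seq_of_forall_exists_step {α : Type*} (P : ℕ → α → Prop) (R : ℕ → α → α → Prop)
    {a : α} (ha : P 0 a) (step : ∀ n a, P n a → ∃ b, P (n + 1) b ∧ R n a b) :
    ∃ s : ℕ → α, (∀ n, P n (s n)) ∧ ∀ n, R n (s n) (s (n + 1)) := by
  choose! next hnext_P hnext_R using step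
  let s : ℕ → α := fun n => Nat.rec a next n
  have hs : ∀ n, P n (s n) := by
    intro n
    induction n with
    | zero => exact ha
    | succ n ih => exact hnext_P n _ ih
  exact ⟨s, hs, fun n => hnext_R n _ (hs n)⟩

section SetValued

variable {X Y : Type*} [PseudoMetricSpace X]

theorem mem_of_tendsto_of_isClosed_graph_inter [TopologicalSpace Y] {F : X → Set Y}
    {K : Set (X × Y)} (hclosed : IsClosed ({p : X × Y | p.2 ∈ F p.1} ∩ K))
    {x : ℕ → X} {y : ℕ → Y} {xh : X} {yh : Y}
    (hx : Tendsto x atTop (𝓝 xh)) (hy : Tendsto y atTop (𝓝 yh))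
    (hmem : ∀ n, y n ∈ F (x n)) (hK : ∀ n, (x n, y n) ∈ K) : yh ∈ F xh :=
  (hclosed.mem_of_tendsto (hx.prodMk_nhds hy) (.of_forall fun n => ⟨hmem n, hK n⟩)).1

variable [AddCommGroup Y] [PseudoMetricSpace Y]

theorem isometry_const_sub_of_shift (hshift : ∀ y y' w : Y, dist (y + w) (y' + w) = dist y y')
    (y : Y) : Isometry (fun z : Y => y - z) :=
  Isometry.of_dist_eq fun a b => by
    have h := hshift (y - a) (y - b) (a + b - y)
    rw [show y - a + (a + b - y) = b by abel, show y - b + (a + b - y) = a by abel] at h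
    rw [← h, dist_comm]

theorem dist_sub_of_shift (hshift : ∀ y y' w : Y, dist (y + w) (y' + w) = dist y y')
    (y a w : Y) : dist (y - a) w = dist y (w + a) := by
  rw [← hshift (y - a) w a, sub_add_cancel]

def IsLinearlyOpenAround (F : X → Set Y) (xb : X) (yb : Y) (c r : ℝ) : Prop :=
  ∀ x ∈ ball xb r, ∀ v ∈ F x ∩ ball yb (c * r), ∀ τ ∈ Ioo (0:ℝ) r,
    ball v (c * τ) ⊆ SVImage F (ball x τ)

def IsLipschitzLikeAround (G : X → Set Y) (xb : X) (zb : Y) (ℓ r : ℝ) : Prop :=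
  ∀ x ∈ ball xb (2 * r), ∀ x' ∈ ball xb (2 * r),
    ∀ z ∈ G x ∩ ball zb (ℓ * r), ∃ z' ∈ G x', dist z z' ≤ ℓ * dist x x'

/-- The invariant of the iteration solving `y ∈ F x + G x`: `β` is how far `x` may still move. -/
structure IsSumIterate (F G : X → Set Y) (xb : X) (yb zb y : Y) (c' ℓ T β : ℝ) (x : X)
    (v z : Y) : Prop where
  mem_F : v ∈ F x
  mem_G : z ∈ G x
  dist_x : dist x xb + β ≤ T
  dist_z : dist z zb + ℓ * β ≤ ℓ * T
  dist_v : dist v yb < c' * T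
  dist_sub : dist (y - z) v < (c' - ℓ) * β

variable {F G : X → Set Y} {xb : X} {yb zb y : Y} {c' ℓ r T β : ℝ}

theorem isSumIterate_start (hshift : ∀ y y' w : Y, dist (y + w) (y' + w) = dist y y')
    (hF : yb ∈ F xb) (hG : zb ∈ G xb) (hℓ : 0 ≤ ℓ) (hT : 0 ≤ T)
    (hy : dist y (yb + zb) < (c' - ℓ) * T) :
    IsSumIterate F G xb yb zb y c' ℓ T T xb yb zb where
  mem_F := hF
  mem_G := hG
  dist_x := by simp
  dist_z := by simp
  dist_v := by rw [dist_self]; nlinarith [dist_nonneg (x := y) (y := yb + zb), mul_nonneg hℓ hT]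
  dist_sub := by rwa [dist_sub_of_shift hshift]

theorem IsSumIterate.exists_next (hshift : ∀ y y' w : Y, dist (y + w) (y' + w) = dist y y')
    (hFopen : IsLinearlyOpenAround F xb yb c' r) (hGlip : IsLipschitzLikeAround G xb zb ℓ r)
    (hℓ : 0 < ℓ) (hℓc : ℓ < c') (hTr : T < r) (hy : dist y (yb + zb) < (c' - ℓ) * T)
    (hβ : 0 < β) {x : X} {v z : Y} (h : IsSumIterate F G xb yb zb y c' ℓ T β x v z) :
    ∃ x' z', IsSumIterate F G xb yb zb y c' ℓ T (ℓ / c' * β) x' (y - z) z' ∧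
      dist x x' ≤ (1 - ℓ / c') * β ∧ dist z z' ≤ ℓ * ((1 - ℓ / c') * β) := by
  have hc' : 0 < c' := hℓ.trans hℓc
  have hxβ := h.dist_x
  have hzβ := h.dist_z
  have hxxb := dist_nonneg (x := x) (y := xb)
  set τ := (1 - ℓ / c') * β with hτ_def
  have hτ : c' * τ = (c' - ℓ) * β := by rw [hτ_def]; field_simp
  have hℓτ : ℓ * τ = (c' - ℓ) * (ℓ / c' * β) := by rw [hτ_def]; field_simp
  have hτβ : τ + ℓ / c' * β = β := by ring
  have hτ0 : 0 < τ := by nlinarith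
  have hqβ : 0 ≤ ℓ / c' * β := by positivity
  have hx : x ∈ ball xb r := mem_ball.2 (by linarith)
  have hv : v ∈ ball yb (c' * r) := mem_ball.2 (h.dist_v.trans (by gcongr))
  obtain ⟨x', hx'x, hFx'⟩ : ∃ x' ∈ ball x τ, y - z ∈ F x' := by
    simpa [SVImage] using hFopen x hx v ⟨h.mem_F, hv⟩ τ ⟨hτ0, by linarith⟩
      (by rw [mem_ball, hτ]; exact h.dist_sub)
  rw [mem_ball, dist_comm] at hx'x
  have hx'xb : dist x' xb ≤ dist x xb + τ := by linarith [dist_triangle_left x' xb x]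
  have hzzb : dist z zb < ℓ * r := by nlinarith
  obtain ⟨z', hGz', hzz'⟩ := hGlip x (mem_ball.2 (by linarith))
    x' (mem_ball.2 (by linarith)) z ⟨h.mem_G, mem_ball.2 hzzb⟩
  have hzz'τ : dist z z' ≤ ℓ * τ := hzz'.trans (by gcongr)
  have hsub : dist (y - z) yb ≤ dist z zb + dist y (yb + zb) := by
    rw [← dist_sub_of_shift hshift, ← (isometry_const_sub_of_shift hshift y).dist_eq z zb]
    exact dist_triangle _ _ _
  refine ⟨x', z', ⟨hFx', hGz', ?_, ?_, ?_, ?_⟩, hx'x.le, hzz'τ⟩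
  · linarith
  · nlinarith [dist_triangle_left z' zb z]
  · nlinarith
  · rw [(isometry_const_sub_of_shift hshift y).dist_eq, dist_comm, ← hℓτ]
    exact hzz'.trans_lt (by gcongr)

theorem ball_subset_svImage_closedBall_of_sum [CompleteSpace X] [CompleteSpace Y]
    (hshift : ∀ y y' w : Y, dist (y + w) (y' + w) = dist y y')
    (hF : yb ∈ F xb) (hG : zb ∈ G xb) (hℓ : 0 < ℓ) (hℓc : ℓ < c')
    (hFclosed : IsClosed ({p : X × Y | p.2 ∈ F p.1} ∩
      closedBall xb (2 * r) ×ˢ closedBall yb (2 * c' * r)))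
    (hGclosed : IsClosed ({p : X × Y | p.2 ∈ G p.1} ∩
      closedBall xb (2 * r) ×ˢ closedBall zb (2 * ℓ * r)))
    (hFopen : IsLinearlyOpenAround F xb yb c' r) (hGlip : IsLipschitzLikeAround G xb zb ℓ r)
    (hT : 0 < T) (hTr : T < r) :
    ball (yb + zb) ((c' - ℓ) * T) ⊆ SVImage (fun x => F x + G x) (closedBall xb T) := by
  intro y hy
  rw [mem_ball] at hy
  set q := ℓ / c'
  have hq0 : 0 < q := div_pos hℓ (hℓ.trans hℓc)
  have hq1 : q < 1 := (div_lt_one (hℓ.trans hℓc)).2 hℓc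
  obtain ⟨s, hinv, hstep⟩ := exists_seq_of_forall_exists_step
    (fun n (p : X × Y × Y) => IsSumIterate F G xb yb zb y c' ℓ T (q ^ n * T) p.1 p.2.1 p.2.2)
    (fun n p p' => p'.2.1 = y - p.2.2 ∧ dist p.1 p'.1 ≤ (1 - q) * T * q ^ n ∧
      dist p.2.2 p'.2.2 ≤ ℓ * (1 - q) * T * q ^ n)
    (a := (xb, yb, zb))
    (by simpa using isSumIterate_start hshift hF hG hℓ.le hT.le hy) fun n p hp => by
      obtain ⟨x', z', h', hxx', hzz'⟩ :=
        hp.exists_next hshift hFopen hGlip hℓ hℓc hTr hy (mul_pos (pow_pos hq0 n) hT)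
      refine ⟨(x', y - p.2.2, z'), by simpa [pow_succ', mul_assoc] using h', rfl, ?_, ?_⟩
      · linarith
      · linarith
  obtain ⟨xh, hxh⟩ := cauchySeq_tendsto_of_complete
    (cauchySeq_of_le_geometric q _ hq1 fun n => (hstep n).2.1)
  obtain ⟨zh, hzh⟩ := cauchySeq_tendsto_of_complete
    (cauchySeq_of_le_geometric q _ hq1 fun n => (hstep n).2.2)
  have hβ : ∀ n, 0 ≤ q ^ n * T := fun n => mul_nonneg (pow_nonneg hq0.le n) hT.le
  have hxT : ∀ n, dist (s n).1 xb ≤ T := fun n => by linarith [(hinv n).dist_x, hβ n]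
  have hx2r : ∀ n, (s n).1 ∈ closedBall xb (2 * r) := fun n =>
    mem_closedBall.2 (by linarith [hxT n])
  have hGh : zh ∈ G xh := mem_of_tendsto_of_isClosed_graph_inter hGclosed hxh hzh
    (fun n => (hinv n).mem_G) fun n => mk_mem_prod (hx2r n)
      (mem_closedBall.2 (by nlinarith [(hinv n).dist_z, hβ n]))
  have hv : ∀ n, y - (s n).2.2 ∈ F (s (n + 1)).1 ∧ dist (y - (s n).2.2) yb ≤ 2 * c' * r :=
    fun n => by
      rw [← (hstep n).1]
      exact ⟨(hinv (n + 1)).mem_F, by nlinarith [(hinv (n + 1)).dist_v]⟩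
  have hFh : y - zh ∈ F xh := mem_of_tendsto_of_isClosed_graph_inter hFclosed
    (hxh.comp (tendsto_add_atTop_nat 1))
    ((isometry_const_sub_of_shift hshift y).continuous.tendsto zh |>.comp hzh)
    (fun n => (hv n).1) fun n => mk_mem_prod (hx2r (n + 1)) (mem_closedBall.2 (hv n).2)
  exact mem_biUnion (mem_closedBall.2 (le_of_tendsto' (hxh.dist tendsto_const_nhds) hxT))
    (by simpa using add_mem_add hFh hGh)

end SetValued

theorem semiregularity_of_sum_general {X Y : Type*} [MetricSpace X] [CompleteSpace X]
    [AddCommGroup Y] [MetricSpace Y] [CompleteSpace Y]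
    (hshift : ∀ y y' w : Y, dist (y + w) (y' + w) = dist y y')
    (F G : X → Set Y) (xb : X) (yb zb : Y) (hF : yb ∈ F xb) (hG : zb ∈ G xb)
    (c' r ℓ : ℝ) (hℓ : 0 < ℓ)
    (hFclosed : IsClosed ({p : X × Y | p.2 ∈ F p.1} ∩
      closedBall xb (2 * r) ×ˢ closedBall yb (2 * c' * r)))
    (hGclosed : IsClosed ({p : X × Y | p.2 ∈ G p.1} ∩
      closedBall xb (2 * r) ×ˢ closedBall zb (2 * ℓ * r)))
    (hFopen : ∀ x ∈ ball xb r, ∀ v ∈ F x ∩ ball yb (c' * r), ∀ τ ∈ Ioo (0:ℝ) r,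
      ball v (c' * τ) ⊆ SVImage F (ball x τ))
    (hGlip : ∀ x ∈ ball xb (2 * r), ∀ x' ∈ ball xb (2 * r),
      ∀ z ∈ G x ∩ ball zb (ℓ * r), ∃ z' ∈ G x', dist z z' ≤ ℓ * dist x x') :
    ∀ c ∈ Ioo ℓ c', ∀ t ∈ Ioo (0:ℝ) r,
      ball (yb + zb) ((c - ℓ) * t) ⊆ SVImage (fun x => F x + G x) (ball xb t) := by
  rintro c ⟨hℓc, hcc'⟩ t ⟨ht, htr⟩
  have hc'ℓ : 0 < c' - ℓ := by linarith
  set T := (c - ℓ) * t / (c' - ℓ) with hT_def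
  have hT : 0 < T := div_pos (mul_pos (by linarith) ht) hc'ℓ
  have hTt : T < t := by rw [div_lt_iff₀ hc'ℓ]; nlinarith
  have hradius : (c - ℓ) * t = (c' - ℓ) * T := by rw [hT_def]; field_simp
  rw [hradius]
  exact (ball_subset_svImage_closedBall_of_sum hshift hF hG hℓ (hℓc.trans hcc') hFclosed hGclosed
    hFopen hGlip hT (hTt.trans htr)).trans
    (biUnion_subset_biUnion_left (closedBall_subset_ball hTt))

/-- semiregularity of the sum (Theorem 4.4 of the paper): if `F` is
linearly open around `(xb,yb)` with rate `c'` and `G` is Lipschitz-like with constant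
`ℓ < c'` (on the indicated localizations, with closed localized graphs), then
`(F+G)(B(xb,t)) ⊇ B(yb+zb,(c−ℓ)t)` for all `c ∈ (ℓ,c')` and `t ∈ (0,r)`.
`Y` is a complete linear metric space with shift-invariant metric. -/
theorem semiregularity_of_sum {X Y : Type*} [MetricSpace X] [CompleteSpace X]
    [AddCommGroup Y] [MetricSpace Y] [CompleteSpace Y]
    (hshift : ∀ y y' w : Y, dist (y + w) (y' + w) = dist y y')
    (F G : X → Set Y) (xb : X) (yb zb : Y) (hF : yb ∈ F xb) (hG : zb ∈ G xb)
    (c' r ℓ : ℝ) (hc' : 0 < c') (hr : 0 < r) (hℓ : 0 < ℓ) (hℓc : ℓ < c')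
    (hFclosed : IsClosed ({p : X × Y | p.2 ∈ F p.1} ∩
      closedBall xb (2 * r) ×ˢ closedBall yb (2 * c' * r)))
    (hGclosed : IsClosed ({p : X × Y | p.2 ∈ G p.1} ∩
      closedBall xb (2 * r) ×ˢ closedBall zb (2 * ℓ * r)))
    (hFopen : ∀ x ∈ ball xb r, ∀ v ∈ F x ∩ ball yb (c' * r), ∀ τ ∈ Ioo (0:ℝ) r,
      ball v (c' * τ) ⊆ SVImage F (ball x τ))
    (hGlip : ∀ x ∈ ball xb (2 * r), ∀ x' ∈ ball xb (2 * r),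
      ∀ z ∈ G x ∩ ball zb (ℓ * r), ∃ z' ∈ G x', dist z z' ≤ ℓ * dist x x') :
    ∀ c ∈ Ioo ℓ c', ∀ t ∈ Ioo (0:ℝ) r,
      ball (yb + zb) ((c - ℓ) * t) ⊆ SVImage (fun x => F x + G x) (ball xb t) :=
  semiregularity_of_sum_general hshift F G xb yb zb hF hG c' r ℓ hℓ hFclosed hGclosed hFopen hGlip
end

section
/- Let X be a complete metric space and Y a complete linear metric space with shift-invariant metric, F, G : X ⇉ Y with F having locally closed graph around (x̄,ȳ) ∈ graph F and G having locally closed graph around (x̄,z̄) ∈ graph G. Then lopen(F+G)(x̄, ȳ+z̄) ≥ sur F(x̄,ȳ) − lip G(x̄,z̄). -/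
open Metric Set Filter Topology
open scoped ENNReal NNReal Pointwise

/-!
Fix `γ < c - μ`, where `c` is a surjection rate of `F` and `μ` an Aubin constant of `G`, and let
`θ = (c - γ) / c < 1`. To reach `y` with `dist y (yb + zb) ≤ γ t`, correct a triple `(x, w, z)`
with `w ∈ F x`, `z ∈ G x` in two moves: openness of `F` at `(x, w)` gives `x'` with `y - z ∈ F x'`
and `dist x x' ≤ dist y (w + z) / c`, and the Aubin property gives `z' ∈ G x'` with
`dist z z' ≤ θ c · dist x x'`. The new residual `dist y ((y - z) + z') = dist z z'` is at most `θ`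
times the old one, so the iterates are Cauchy, `x` moves by at most `t` in total, and closedness
of the graphs puts the limit point on `F + G`.
-/

section Moduli

variable {X Y : Type*} [PseudoMetricSpace X] [PseudoMetricSpace Y]

def OpenAtLinearRate (F : X → Set Y) (xb : X) (yb : Y) (c : ℝ) : Prop :=
  ∃ ε > (0:ℝ), ∀ t ∈ Ioo (0:ℝ) ε, closedBall yb (c * t) ⊆ SVImage F (closedBall xb t)

def OpenAroundLinearRate (F : X → Set Y) (xb : X) (yb : Y) (c : ℝ) : Prop :=
  ∃ ε > (0:ℝ), ∃ U ∈ 𝓝 xb, ∃ V ∈ 𝓝 yb, ∀ x ∈ U, ∀ y ∈ V, y ∈ F x → ∀ t ∈ Ioo (0:ℝ) ε,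
    closedBall y (c * t) ⊆ SVImage F (closedBall x t)

def HasAubinProperty (G : X → Set Y) (xb : X) (zb : Y) (μ : ℝ) : Prop :=
  ∃ U ∈ 𝓝 xb, ∃ V ∈ 𝓝 zb, ∀ x ∈ U, ∀ x' ∈ U, ∀ z ∈ G x' ∩ V,
    Metric.infEDist z (G x) ≤ ENNReal.ofReal (μ * dist x x')

theorem ofReal_le_lopenMod {F : X → Set Y} {xb : X} {yb : Y} {a : ℝ}
    (h : ∀ γ, 0 < γ → γ < a → OpenAtLinearRate F xb yb γ) :
    ENNReal.ofReal a ≤ lopenMod F xb yb := by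
  refine le_of_forall_lt fun b hb => ?_
  obtain ⟨γ, -, hbγ, hγa⟩ := ENNReal.lt_iff_exists_real_btwn.1 hb
  have hγ : 0 < γ := ENNReal.ofReal_pos.1 (pos_of_gt hbγ)
  have hγa' : γ < a := (ENNReal.ofReal_lt_ofReal_iff'.1 hγa).1
  exact hbγ.trans_le (le_sSup ⟨γ, ⟨hγ, h γ hγ hγa'⟩, rfl⟩)

end Moduli

theorem exists_seq_of_forall_exists_succ {α : Type*} (P : ℕ → α → Prop) (R : ℕ → α → α → Prop)
    (a : α) (ha : P 0 a) (h : ∀ k a, P k a → ∃ a', P (k + 1) a' ∧ R k a a') :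
    ∃ f : ℕ → α, ∀ k, P k (f k) ∧ R k (f k) (f (k + 1)) := by
  choose! g hgP hgR using h
  have hf : ∀ k, P k (Nat.rec a (fun k b => g k b) k) := fun k => by
    induction k with
    | zero => exact ha
    | succ k ih => exact hgP k _ ih
  exact ⟨fun k => Nat.rec a (fun k b => g k b) k, fun k => ⟨hf k, hgR k _ (hf k)⟩⟩

theorem dist_le_one_sub_pow_succ_mul {α : Type*} [PseudoMetricSpace α] {a b b' : α} {θ r : ℝ}
    {k : ℕ} (h : dist b a ≤ (1 - θ ^ k) * r) (h' : dist b b' ≤ (1 - θ) * r * θ ^ k) :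
    dist b' a ≤ (1 - θ ^ (k + 1)) * r :=
  calc dist b' a ≤ dist b b' + dist b a := dist_triangle_left _ _ _
    _ ≤ (1 - θ) * r * θ ^ k + (1 - θ ^ k) * r := add_le_add h' h
    _ = (1 - θ ^ (k + 1)) * r := by ring

theorem mem_add_of_tendsto {X Y : Type*} [TopologicalSpace X] [TopologicalSpace Y] [T2Space Y]
    [Add Y] [ContinuousAdd Y] {F G : X → Set Y} {SF SG : Set (X × Y)}
    (hFcl : IsClosed ({p : X × Y | p.2 ∈ F p.1} ∩ SF))
    (hGcl : IsClosed ({p : X × Y | p.2 ∈ G p.1} ∩ SG)) {x : ℕ → X} {w z : ℕ → Y} {x₀ : X}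
    {w₀ z₀ y : Y} (hx : Tendsto x atTop (𝓝 x₀)) (hw : Tendsto w atTop (𝓝 w₀))
    (hz : Tendsto z atTop (𝓝 z₀)) (hwF : ∀ k, (x k, w k) ∈ {p : X × Y | p.2 ∈ F p.1} ∩ SF)
    (hzG : ∀ k, (x k, z k) ∈ {p : X × Y | p.2 ∈ G p.1} ∩ SG)
    (hy : Tendsto (fun k => w k + z k) atTop (𝓝 y)) :
    y ∈ F x₀ + G x₀ := by
  have hw₀ := hFcl.mem_of_tendsto (hx.prodMk_nhds hw) (Eventually.of_forall hwF)
  have hz₀ := hGcl.mem_of_tendsto (hx.prodMk_nhds hz) (Eventually.of_forall hzG)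
  rw [tendsto_nhds_unique hy (hw.add hz)]
  exact add_mem_add hw₀.1 hz₀.1

section Iteration

variable {X Y : Type*} [PseudoMetricSpace X] {F G : X → Set Y} {xb : X} {yb zb : Y}
  {c μ κ δ ε s t θ : ℝ}

theorem exists_correction_step [PseudoMetricSpace Y]
    (hsur : ∀ x ∈ closedBall xb δ, ∀ w ∈ closedBall yb δ, w ∈ F x → ∀ s ∈ Ioo (0:ℝ) ε,
      closedBall w (c * s) ⊆ SVImage F (closedBall x s))
    (hlip : ∀ x ∈ closedBall xb δ, ∀ x' ∈ closedBall xb δ, ∀ z ∈ G x' ∩ closedBall zb δ,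
      Metric.infEDist z (G x) ≤ ENNReal.ofReal (μ * dist x x'))
    (hμ : 0 ≤ μ) (hμκ : μ < κ) (hs : s ∈ Ioo 0 ε) {x : X} {v w z : Y}
    (hx : dist x xb + s ≤ δ) (hw : dist w yb ≤ δ) (hz : dist z zb ≤ δ) (hwF : w ∈ F x)
    (hzG : z ∈ G x) (hv : dist v w ≤ c * s) :
    ∃ x', v ∈ F x' ∧ dist x x' ≤ s ∧ ∃ z' ∈ G x', dist z z' ≤ κ * s := by
  have hxδ : x ∈ closedBall xb δ := mem_closedBall.2 (by linarith [hs.1])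
  obtain ⟨x', hx', hvF⟩ : ∃ x' ∈ closedBall x s, v ∈ F x' := by
    simpa only [SVImage, mem_iUnion₂, exists_prop] using
      hsur x hxδ w (mem_closedBall.2 hw) hwF s hs (mem_closedBall.2 hv)
  rw [mem_closedBall] at hx'
  have hx'δ : x' ∈ closedBall xb δ := mem_closedBall.2 (by linarith [dist_triangle x' x xb])
  have hlt : μ * dist x' x < κ * s :=
    (mul_le_mul_of_nonneg_left hx' hμ).trans_lt (mul_lt_mul_of_pos_right hμκ hs.1)
  obtain ⟨z', hz'G, hz'⟩ := Metric.infEDist_lt_iff.1 <|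
    (hlip x' hx'δ x hxδ z ⟨hzG, mem_closedBall.2 hz⟩).trans_lt <|
      (ENNReal.ofReal_lt_ofReal_iff (by nlinarith [hs.1])).2 hlt
  exact ⟨x', hvF, by rwa [dist_comm], z', hz'G, (edist_lt_ofReal.1 hz').le⟩

theorem exists_next_approximation [NormedAddCommGroup Y]
    (hsur : ∀ x ∈ closedBall xb δ, ∀ w ∈ closedBall yb δ, w ∈ F x → ∀ s ∈ Ioo (0:ℝ) ε,
      closedBall w (c * s) ⊆ SVImage F (closedBall x s))
    (hlip : ∀ x ∈ closedBall xb δ, ∀ x' ∈ closedBall xb δ, ∀ z ∈ G x' ∩ closedBall zb δ,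
      Metric.infEDist z (G x) ≤ ENNReal.ofReal (μ * dist x x'))
    (hμ : 0 ≤ μ) (hμθ : μ < θ * c) (hθ : θ ∈ Ioo 0 1) (ht : t ∈ Ioo 0 ε) (htδ : t ≤ δ)
    (hctδ : c * t ≤ δ) {y : Y} {k : ℕ} {x : X} {w z : Y} (hwF : w ∈ F x) (hzG : z ∈ G x)
    (hres : dist y (w + z) ≤ (1 - θ) * (c * t) * θ ^ k) (hx : dist x xb ≤ (1 - θ ^ k) * t)
    (hw : dist w yb ≤ (1 - θ ^ k) * (c * t)) (hz : dist z zb ≤ (1 - θ ^ k) * (θ * (c * t))) :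
    ∃ x' z', (y - z ∈ F x' ∧ z' ∈ G x' ∧ dist y (y - z + z') ≤ (1 - θ) * (c * t) * θ ^ (k + 1) ∧
      dist x' xb ≤ (1 - θ ^ (k + 1)) * t ∧ dist (y - z) yb ≤ (1 - θ ^ (k + 1)) * (c * t) ∧
      dist z' zb ≤ (1 - θ ^ (k + 1)) * (θ * (c * t))) ∧
      (dist x x' ≤ (1 - θ) * t * θ ^ k ∧ dist w (y - z) ≤ (1 - θ) * (c * t) * θ ^ k ∧
      dist z z' ≤ (1 - θ) * (θ * (c * t)) * θ ^ k) := by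
  have hθk : 0 < θ ^ k := pow_pos hθ.1 k
  have hc : 0 < c := pos_of_mul_pos_right (hμ.trans_lt hμθ) hθ.1.le
  have hct : 0 < c * t := mul_pos hc ht.1
  have hs : (1 - θ) * t * θ ^ k ∈ Ioo 0 ε := by
    refine ⟨mul_pos (mul_pos (sub_pos.2 hθ.2) ht.1) hθk, lt_of_le_of_lt ?_ ht.2⟩
    nlinarith [mul_nonneg (sub_nonneg.2 (pow_le_one₀ hθ.1.le hθ.2.le (n := k))) ht.1.le,
      mul_pos (mul_pos hθ.1 ht.1) hθk]
  have hwz : dist w (y - z) ≤ (1 - θ) * (c * t) * θ ^ k := by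
    rwa [dist_sub_eq_dist_add_right, dist_comm]
  obtain ⟨x', hvF, hx', z', hz'G, hz'⟩ := exists_correction_step hsur hlip hμ hμθ hs
    (by nlinarith [mul_pos (mul_pos hθk hθ.1) ht.1]) (by nlinarith [mul_pos hθk hct])
    (by nlinarith [mul_pos hθk (mul_pos hθ.1 hct), mul_pos (sub_pos.2 hθ.2) hct])
    hwF hzG (by rw [dist_comm]; linarith)
  have hzz' : dist z z' ≤ (1 - θ) * (θ * (c * t)) * θ ^ k := hz'.trans_eq (by ring)
  have hres' : dist y (y - z + z') = dist z z' := by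
    rw [show y - z + z' = y + (z' - z) by abel, dist_self_add_right, dist_comm, dist_eq_norm]
  refine ⟨x', z', ⟨hvF, hz'G, ?_, dist_le_one_sub_pow_succ_mul hx hx',
    dist_le_one_sub_pow_succ_mul hw hwz, dist_le_one_sub_pow_succ_mul hz hzz'⟩, hx', hwz, hzz'⟩
  rw [hres', pow_succ]
  linarith

theorem mem_svImage_add_of_dist_le [NormedAddCommGroup Y] [CompleteSpace X] [CompleteSpace Y]
    {SF SG : Set (X × Y)}
    (hsur : ∀ x ∈ closedBall xb δ, ∀ w ∈ closedBall yb δ, w ∈ F x → ∀ s ∈ Ioo (0:ℝ) ε,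
      closedBall w (c * s) ⊆ SVImage F (closedBall x s))
    (hlip : ∀ x ∈ closedBall xb δ, ∀ x' ∈ closedBall xb δ, ∀ z ∈ G x' ∩ closedBall zb δ,
      Metric.infEDist z (G x) ≤ ENNReal.ofReal (μ * dist x x'))
    (hFcl : IsClosed ({p : X × Y | p.2 ∈ F p.1} ∩ SF))
    (hSF : closedBall xb δ ×ˢ closedBall yb δ ⊆ SF)
    (hGcl : IsClosed ({p : X × Y | p.2 ∈ G p.1} ∩ SG))
    (hSG : closedBall xb δ ×ˢ closedBall zb δ ⊆ SG) (hF : yb ∈ F xb) (hG : zb ∈ G xb)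
    (hμ : 0 ≤ μ) (hμθ : μ < θ * c) (hθ : θ ∈ Ioo 0 1) (ht : t ∈ Ioo 0 ε) (htδ : t ≤ δ)
    (hctδ : c * t ≤ δ) {y : Y} (hy : dist y (yb + zb) ≤ (1 - θ) * (c * t)) :
    y ∈ SVImage (fun x => F x + G x) (closedBall xb t) := by
  -- The `k`-th iterate has residual `θ ^ k` times the initial budget `(1 - θ) c t` and has used
  -- the fraction `1 - θ ^ k` of its displacement budgets `t`, `c t`, `θ c t` in `x`, `w`, `z`.
  obtain ⟨p, hp⟩ := exists_seq_of_forall_exists_succ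
    (fun k (p : X × Y × Y) => p.2.1 ∈ F p.1 ∧ p.2.2 ∈ G p.1 ∧
      dist y (p.2.1 + p.2.2) ≤ (1 - θ) * (c * t) * θ ^ k ∧ dist p.1 xb ≤ (1 - θ ^ k) * t ∧
      dist p.2.1 yb ≤ (1 - θ ^ k) * (c * t) ∧ dist p.2.2 zb ≤ (1 - θ ^ k) * (θ * (c * t)))
    (fun k p p' => dist p.1 p'.1 ≤ (1 - θ) * t * θ ^ k ∧
      dist p.2.1 p'.2.1 ≤ (1 - θ) * (c * t) * θ ^ k ∧
      dist p.2.2 p'.2.2 ≤ (1 - θ) * (θ * (c * t)) * θ ^ k)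
    (xb, yb, zb) (by simpa using ⟨hF, hG, hy⟩) fun k ⟨x, w, z⟩ ⟨hwF, hzG, hres, hx, hw, hz⟩ => by
      obtain ⟨x', z', hP, hR⟩ := exists_next_approximation hsur hlip hμ hμθ hθ ht htδ hctδ
        hwF hzG hres hx hw hz
      exact ⟨(x', y - z, z'), hP, hR⟩
  obtain ⟨x₀, hx₀⟩ := cauchySeq_tendsto_of_complete <|
    cauchySeq_of_le_geometric θ _ hθ.2 fun k => (hp k).2.1
  obtain ⟨w₀, hw₀⟩ := cauchySeq_tendsto_of_complete <|
    cauchySeq_of_le_geometric θ _ hθ.2 fun k => (hp k).2.2.1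
  obtain ⟨z₀, hz₀⟩ := cauchySeq_tendsto_of_complete <|
    cauchySeq_of_le_geometric θ _ hθ.2 fun k => (hp k).2.2.2
  have hc : 0 < c := pos_of_mul_pos_right (hμ.trans_lt hμθ) hθ.1.le
  have hbudget : ∀ k (r : ℝ), 0 ≤ r → (1 - θ ^ k) * r ≤ r := fun k r hr =>
    mul_le_of_le_one_left hr (sub_le_self _ (pow_nonneg hθ.1.le k))
  have hxt : ∀ k, (p k).1 ∈ closedBall xb t := fun k =>
    (hp k).1.2.2.2.1.trans (hbudget k t ht.1.le)
  have hwδ : ∀ k, (p k).2.1 ∈ closedBall yb δ := fun k =>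
    (hp k).1.2.2.2.2.1.trans ((hbudget k _ (mul_pos hc ht.1).le).trans hctδ)
  have hzδ : ∀ k, (p k).2.2 ∈ closedBall zb δ := fun k =>
    (hp k).1.2.2.2.2.2.trans <| (hbudget k _ (mul_pos hθ.1 (mul_pos hc ht.1)).le).trans <|
      (mul_le_of_le_one_left (mul_pos hc ht.1).le hθ.2.le).trans hctδ
  have hres : Tendsto (fun k => (p k).2.1 + (p k).2.2) atTop (𝓝 y) := by
    refine tendsto_iff_dist_tendsto_zero.2 <| squeeze_zero (fun _ => dist_nonneg)
      (fun k => (dist_comm _ y).trans_le (hp k).1.2.2.1) ?_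
    simpa using (tendsto_pow_atTop_nhds_zero_of_lt_one hθ.1.le hθ.2).const_mul ((1 - θ) * (c * t))
  refine mem_biUnion (isClosed_closedBall.mem_of_tendsto hx₀ (Eventually.of_forall hxt)) ?_
  exact mem_add_of_tendsto hFcl hGcl hx₀ hw₀ hz₀
    (fun k => ⟨(hp k).1.1, hSF ⟨(mem_closedBall.1 (hxt k)).trans htδ, hwδ k⟩⟩)
    (fun k => ⟨(hp k).1.2.1, hSG ⟨(mem_closedBall.1 (hxt k)).trans htδ, hzδ k⟩⟩) hres

end Iteration

theorem openAtLinearRate_add {X Y : Type*} [PseudoMetricSpace X] [CompleteSpace X]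
    [NormedAddCommGroup Y] [CompleteSpace Y] {F G : X → Set Y} {xb : X} {yb zb : Y}
    {c μ γ : ℝ} (hsur : OpenAroundLinearRate F xb yb c) (hlip : HasAubinProperty G xb zb μ)
    (hF : yb ∈ F xb) (hG : zb ∈ G xb)
    (hFcl : ∃ ε > (0:ℝ), IsClosed ({p : X × Y | p.2 ∈ F p.1} ∩
      closedBall xb ε ×ˢ closedBall yb ε))
    (hGcl : ∃ ε > (0:ℝ), IsClosed ({p : X × Y | p.2 ∈ G p.1} ∩
      closedBall xb ε ×ˢ closedBall zb ε))
    (hμ : 0 ≤ μ) (hγ : 0 < γ) (hγμ : γ < c - μ) :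
    OpenAtLinearRate (fun x => F x + G x) xb (yb + zb) γ := by
  obtain ⟨ε, hε, U, hU, V, hV, hsur⟩ := hsur
  obtain ⟨U', hU', V', hV', hlip⟩ := hlip
  obtain ⟨εF, hεF, hFcl⟩ := hFcl
  obtain ⟨εG, hεG, hGcl⟩ := hGcl
  obtain ⟨δ, ⟨hδU, hδV, hδV', hδF, hδG⟩, hδ⟩ : ∃ δ, (closedBall xb δ ⊆ U ∩ U' ∧
      closedBall yb δ ⊆ V ∧ closedBall zb δ ⊆ V' ∧ δ ≤ εF ∧ δ ≤ εG) ∧ 0 < δ :=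
    ((((eventually_closedBall_subset (inter_mem hU hU')).and <|
      (eventually_closedBall_subset hV).and <| (eventually_closedBall_subset hV').and <|
        (ge_mem_nhds hεF).and (ge_mem_nhds hεG)).filter_mono nhdsWithin_le_nhds).and
          (self_mem_nhdsWithin (s := Ioi 0))).exists
  have hc : 0 < c := by linarith
  refine ⟨min ε (min δ (δ / c)), by positivity, fun t ht y hy => ?_⟩
  have hct : c * t ≤ δ := by
    rw [← le_div_iff₀' hc]; exact ht.2.le.trans ((min_le_right _ _).trans (min_le_right _ _))
  refine mem_svImage_add_of_dist_le (θ := (c - γ) / c)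
    (fun x hx w hw => hsur x (hδU hx).1 w (hδV hw))
    (fun x hx x' hx' z hz => hlip x (hδU hx).2 x' (hδU hx').2 z ⟨hz.1, hδV' hz.2⟩) hFcl
    (prod_mono (closedBall_subset_closedBall hδF) (closedBall_subset_closedBall hδF)) hGcl
    (prod_mono (closedBall_subset_closedBall hδG) (closedBall_subset_closedBall hδG)) hF hG hμ
    (by rw [div_mul_cancel₀ _ hc.ne']; linarith)
    ⟨div_pos (by linarith) hc, (div_lt_one hc).2 (by linarith)⟩
    ⟨ht.1, ht.2.trans_le (min_le_left _ _)⟩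
    (ht.2.le.trans ((min_le_right _ _).trans (min_le_left _ _))) hct ?_
  rw [show (1 - (c - γ) / c) * (c * t) = γ * t by field_simp; ring]
  exact mem_closedBall.1 hy

/-- `lopen (F+G)(xb, yb+zb) ≥ sur F (xb,yb) − lip G (xb,zb)` (with
truncated subtraction, so the inequality is trivially true when
`sur F (xb,yb) ≤ lip G (xb,zb)`), for `F` and `G` with locally closed graphs, `X`
complete, and `Y` a complete linear metric space with shift-invariant metric. -/
theorem lopen_sum_ge_sur_sub_lip {X Y : Type*} [MetricSpace X] [CompleteSpace X]
    [AddCommGroup Y] [MetricSpace Y] [CompleteSpace Y]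
    (hshift : ∀ y y' w : Y, dist (y + w) (y' + w) = dist y y')
    (F G : X → Set Y) (xb : X) (yb zb : Y) (hF : yb ∈ F xb) (hG : zb ∈ G xb)
    (hFclosed : ∃ ε > (0:ℝ), IsClosed ({p : X × Y | p.2 ∈ F p.1} ∩
      closedBall xb ε ×ˢ closedBall yb ε))
    (hGclosed : ∃ ε > (0:ℝ), IsClosed ({p : X × Y | p.2 ∈ G p.1} ∩
      closedBall xb ε ×ˢ closedBall zb ε)) :
    surMod F xb yb - lipMod G xb zb ≤
      lopenMod (fun x => F x + G x) xb (yb + zb) := by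
  -- A translation-invariant metric on an abelian group comes from the norm `‖y‖ = dist 0 y`.
  let : Norm Y := ⟨dist 0⟩
  let : NormedAddCommGroup Y := NormedAddCommGroup.ofAddDist (fun _ => rfl) fun y y' w => by
    rw [add_comm w y, add_comm w y', hshift]
  rw [tsub_le_iff_right]
  refine sSup_le ?_
  rintro _ ⟨c, ⟨-, hsur⟩, rfl⟩
  rw [lipMod, ENNReal.add_sInf]
  refine le_iInf₂ ?_
  rintro _ ⟨μ, ⟨hμ, hlip⟩, rfl⟩
  calc ENNReal.ofReal c ≤ ENNReal.ofReal (c - μ) + ENNReal.ofReal μ := by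
        simpa using ENNReal.ofReal_add_le (p := c - μ) (q := μ)
    _ ≤ _ := by
        gcongr
        exact ofReal_le_lopenMod fun γ hγ hγμ =>
          openAtLinearRate_add hsur hlip hF hG hFclosed hGclosed hμ.le hγ hγμ
end

section
/- The function f : ℝ → ℝ defined by f(x) = x + (x³/|x|)·|sin(1/x)| for x ≠ 0 and f(0) = 0 is Lipschitz near 0, Fréchet differentiable at 0 with f'(0) = 1, and open with a linear rate at 0 with lopen f(0) = 1, yet sur f(0) = 0, i.e. f is not metrically regular around (0,0). -/
open Metric Set Filter Topology
open scoped ENNReal NNReal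

open scoped Classical in
/-- The function `f(x) = x + (x³/|x|)·|sin(1/x)|`, `f(0) = 0`. -/
noncomputable def fEx : ℝ → ℝ := fun x =>
  if x = 0 then 0 else x + (x ^ 3 / |x|) * |Real.sin (1 / x)|

/-!
Write `fEx x = x + g x` with `g x = x |x| |sin (1/x)|`. Then `|g x| ≤ x²` and `g x` has the sign of
`x`: the first bound gives `fEx'(0) = 1` and `fEx [-t, t] ⊆ [-(t + t²), t + t²]`, the second (with
continuity) `[-t, t] ⊆ fEx [-t, t]`, so `lopen fEx (0) = 1`.

Around `(0, 0)` the picture changes at the zeros `x₀ = 1/(kπ)` of `sin (1/x)`, where `fEx x₀ = x₀`: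
the kink of `|sin|` makes `fEx` flat to the left of `x₀`, namely `fEx y ≥ x₀ - O((x₀ - y)²/x₀)`
for `y ≤ x₀`. With `t = x₀³` the point `x₀ - c t` is then missed by `fEx [x₀ - t, x₀ + t]` as soon
as `x₀ ≪ √c`, and `x₀ → 0` as `k → ∞`, so no rate `c > 0` works around `(0, 0)`.
-/

section Moduli

variable {X Y : Type*}

lemma svImage_singleton (f : X → Y) (s : Set X) : SVImage (fun x => {f x}) s = f '' s := by
  ext z
  simp [SVImage, eq_comm]

lemma surMod_eq_zero [PseudoMetricSpace X] [PseudoMetricSpace Y] {F : X → Set Y} {xb : X}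
    {yb : Y}
    (h : ∀ c > (0:ℝ), ∀ ε > (0:ℝ), ∀ U ∈ 𝓝 xb, ∀ V ∈ 𝓝 yb, ∃ x ∈ U, ∃ y ∈ V ∩ F x,
      ∃ t ∈ Ioo (0:ℝ) ε, ¬ closedBall y (c * t) ⊆ SVImage F (closedBall x t)) :
    surMod F xb yb = 0 := by
  refine nonpos_iff_eq_zero.mp (sSup_le ?_)
  rintro _ ⟨c, ⟨hc, ε, hε, U, hU, V, hV, hsur⟩, rfl⟩
  obtain ⟨x, hx, y, ⟨hy, hyx⟩, t, ht, hnot⟩ := h c hc ε hε U hU V hV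
  exact (hnot (hsur x hx y hy hyx t ht)).elim

end Moduli

section RealFunction

variable {f : ℝ → ℝ} {x : ℝ}

lemma ofReal_le_lopenMod_s18 {c δ : ℝ} (hc : 0 < c) (hδ : 0 < δ) (hf : ContinuousOn f (ball x δ))
    (hleft : ∀ t ∈ Ioo 0 δ, f (x - t) ≤ f x - c * t)
    (hright : ∀ t ∈ Ioo 0 δ, f x + c * t ≤ f (x + t)) :
    ENNReal.ofReal c ≤ lopenMod (fun x => {f x}) x (f x) := by
  refine le_sSup ⟨c, ⟨hc, δ, hδ, fun t ht => ?_⟩, rfl⟩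
  have hcont : ContinuousOn f (Icc (x - t) (x + t)) :=
    hf.mono (Real.closedBall_eq_Icc ▸ closedBall_subset_ball ht.2)
  rw [svImage_singleton, Real.closedBall_eq_Icc, Real.closedBall_eq_Icc]
  exact (Icc_subset_Icc (hleft t ht) (hright t ht)).trans
    (intermediate_value_Icc (by linarith [ht.1]) hcont)

lemma lopenMod_le_ofReal {K : ℝ} (hf : ∀ y, |f y - f x| ≤ |y - x| * (K + |y - x|)) :
    lopenMod (fun x => {f x}) x (f x) ≤ ENNReal.ofReal K := by
  refine sSup_le ?_
  rintro _ ⟨c, ⟨hc, ε, hε, hsub⟩, rfl⟩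
  refine ENNReal.ofReal_le_ofReal (le_of_forall_pos_lt_add fun η hη => ?_)
  set t := min (ε / 2) (η / 2)
  have ht : t ∈ Ioo 0 ε := ⟨by positivity, (min_le_left _ _).trans_lt (by linarith)⟩
  have hmem : f x + c * t ∈ closedBall (f x) (c * t) := by
    rw [mem_closedBall, Real.dist_eq, add_sub_cancel_left, abs_of_pos (by positivity)]
  obtain ⟨y, hy, hfy⟩ := svImage_singleton f _ ▸ hsub t ht hmem
  have hyx : |y - x| ≤ t := by rwa [mem_closedBall, Real.dist_eq] at hy
  have hbound := hf y
  rw [hfy, add_sub_cancel_left, abs_of_pos (by positivity)] at hbound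
  have hct : c * t ≤ t * (K + t) := by
    rcases le_total 0 (K + |y - x|) with hK | hK
    · nlinarith [abs_nonneg (y - x)]
    · nlinarith [abs_nonneg (y - x), ht.1]
  have htη : t ≤ η / 2 := min_le_right _ _
  nlinarith [ht.1]

end RealFunction

lemma abs_mul_abs_sub_mul_abs_le (x y : ℝ) :
    |(x * |x| - y * |y|)| ≤ (|x| + |y|) * |x - y| := by
  rcases abs_cases x with ⟨hx, _⟩ | ⟨hx, _⟩ <;> rcases abs_cases y with ⟨hy, _⟩ | ⟨hy, _⟩ <;>
    rw [hx, hy, abs_le] <;> constructor <;>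
    nlinarith [le_abs_self (x - y), neg_abs_le (x - y)]

lemma abs_mul_abs_mul_comp_inv_sub_le {φ : ℝ → ℝ} (hφ : ∀ a b, |φ a - φ b| ≤ |a - b|)
    (hφ1 : ∀ a, |φ a| ≤ 1) (x y : ℝ) :
    |x * |x| * φ (1 / x) - y * |y| * φ (1 / y)| ≤ (1 + |x| + |y|) * |x - y| := by
  wlog hxy : |x| ≤ |y| generalizing x y
  · rw [abs_sub_comm, abs_sub_comm x y, add_right_comm]
    exact this y x (le_of_not_ge hxy)
  have hfirst : |x * |x| * (φ (1 / x) - φ (1 / y))| ≤ |x - y| := by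
    rcases eq_or_ne x 0 with rfl | hx
    · simp
    have hy : y ≠ 0 := abs_pos.mp ((abs_pos.mpr hx).trans_le hxy)
    calc |x * |x| * (φ (1 / x) - φ (1 / y))| ≤ |x| * |x| * |1 / x - 1 / y| := by
          rw [abs_mul, abs_mul, abs_abs]
          exact mul_le_mul_of_nonneg_left (hφ _ _) (by positivity)
      _ = |x| / |y| * |x - y| := by
          rw [div_sub_div _ _ hx hy, abs_div, abs_mul, abs_sub_comm]
          field_simp
      _ ≤ |x - y| :=
          mul_le_of_le_one_left (abs_nonneg _) ((div_le_one (abs_pos.mpr hy)).mpr hxy)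
  have hsecond : |(x * |x| - y * |y|) * φ (1 / y)| ≤ (|x| + |y|) * |x - y| := by
    rw [abs_mul]
    exact (mul_le_of_le_one_right (abs_nonneg _) (hφ1 _)).trans (abs_mul_abs_sub_mul_abs_le x y)
  calc _ = |x * |x| * (φ (1 / x) - φ (1 / y)) + (x * |x| - y * |y|) * φ (1 / y)| := by
        congr 1
        ring
    _ ≤ |x - y| + (|x| + |y|) * |x - y| := (abs_add_le _ _).trans (add_le_add hfirst hsecond)
    _ = _ := by ring

lemma hasDerivAt_zero_of_abs_le_sq {g : ℝ → ℝ} (hg : ∀ x, |g x| ≤ x ^ 2) : HasDerivAt g 0 0 := by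
  have hg0 : g 0 = 0 := abs_nonpos_iff.mp (by simpa using hg 0)
  rw [hasDerivAt_iff_isLittleO_nhds_zero]
  simp only [zero_add, hg0, sub_zero, smul_zero]
  exact (Asymptotics.isBigO_of_le _ fun x => by simpa using hg x).trans_isLittleO
    (Asymptotics.isLittleO_pow_id one_lt_two)

lemma abs_sin_add_of_sin_eq_zero {a : ℝ} (ha : Real.sin a = 0) (u : ℝ) :
    |Real.sin (a + u)| = |Real.sin u| := by
  have hcos : |Real.cos a| = 1 := by
    rcases Real.sin_eq_zero_iff_cos_eq.mp ha with h | h <;> simp [h]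
  rw [Real.sin_add, ha, zero_mul, zero_add, abs_mul, hcos, one_mul]

lemma tendsto_inv_natCast_mul_pi :
    Tendsto (fun k : ℕ => ((k : ℝ) * Real.pi)⁻¹) atTop (𝓝[>] 0) :=
  tendsto_inv_atTop_nhdsGT_zero.comp (tendsto_natCast_atTop_atTop.atTop_mul_const Real.pi_pos)

lemma fEx_eq (x : ℝ) : fEx x = x + x * |x| * |Real.sin (1 / x)| := by
  unfold fEx
  split_ifs with h
  · simp [h]
  · rw [show x ^ 3 / |x| = x * |x| by
      rw [div_eq_iff (abs_ne_zero.mpr h), mul_assoc, abs_mul_abs_self]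
      ring]

lemma fEx_zero : fEx 0 = 0 := by simp [fEx]

lemma fEx_eq_self_of_sin_eq_zero {x : ℝ} (hx : Real.sin (1 / x) = 0) : fEx x = x := by
  rw [fEx_eq, hx, abs_zero, mul_zero, add_zero]

lemma abs_fEx_sub_self_le (x : ℝ) : |fEx x - x| ≤ x ^ 2 := by
  rw [fEx_eq, add_sub_cancel_left, abs_mul, abs_mul, abs_abs, abs_abs, ← sq_abs, sq]
  exact mul_le_of_le_one_right (by positivity) (Real.abs_sin_le_one _)

lemma abs_fEx_le (x : ℝ) : |fEx x| ≤ |x| * (1 + |x|) := by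
  nlinarith [abs_sub_abs_le_abs_sub (fEx x) x, abs_fEx_sub_self_le x, sq_abs x]

lemma self_le_fEx {x : ℝ} (hx : 0 ≤ x) : x ≤ fEx x := by
  rw [fEx_eq]
  exact le_add_of_nonneg_right (by positivity)

lemma fEx_le_self {x : ℝ} (hx : x ≤ 0) : fEx x ≤ x := by
  rw [fEx_eq]
  exact add_le_of_nonpos_right (mul_nonpos_of_nonpos_of_nonneg
    (mul_nonpos_of_nonpos_of_nonneg hx (abs_nonneg x)) (abs_nonneg _))

lemma lipschitzOnWith_fEx : LipschitzOnWith 4 fEx (ball 0 1) := by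
  refine LipschitzOnWith.of_dist_le_mul fun x hx y hy => ?_
  rw [mem_ball_zero_iff, Real.norm_eq_abs] at hx hy
  have hg := abs_mul_abs_mul_comp_inv_sub_le (φ := fun a => |Real.sin a|)
    (fun a b => (abs_abs_sub_abs_le_abs_sub _ _).trans (Real.abs_sin_sub_sin_le a b))
    (fun a => (abs_abs _).trans_le (Real.abs_sin_le_one a)) x y
  rw [Real.dist_eq, Real.dist_eq, fEx_eq, fEx_eq, add_sub_add_comm]
  push_cast
  nlinarith [abs_add_le (x - y) (x * |x| * |Real.sin (1 / x)| - y * |y| * |Real.sin (1 / y)|),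
    abs_nonneg (x - y)]

lemma hasDerivAt_fEx : HasDerivAt fEx 1 0 := by
  have h := (hasDerivAt_id (0 : ℝ)).add (hasDerivAt_zero_of_abs_le_sq abs_fEx_sub_self_le)
  rwa [add_zero, show id + (fun x => fEx x - x) = fEx from funext fun x => add_sub_cancel x (fEx x)]
    at h

lemma lopenMod_fEx : lopenMod (fun x => {fEx x}) 0 (fEx 0) = 1 := by
  refine le_antisymm ?_ ?_
  · simpa using lopenMod_le_ofReal (f := fEx) (x := 0) (K := 1)
      fun y => by simpa [fEx_zero] using abs_fEx_le y
  · simpa using ofReal_le_lopenMod_s18 (f := fEx) (x := 0) one_pos one_pos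
      lipschitzOnWith_fEx.continuousOn
      (fun t ht => by simpa [fEx_zero] using fEx_le_self (neg_nonpos.mpr ht.1.le))
      (fun t ht => by simpa [fEx_zero] using self_le_fEx ht.1.le)

lemma fEx_ge_of_sin_inv_eq_zero {x₀ y : ℝ} (hs : Real.sin (1 / x₀) = 0) (hy : 0 < y)
    (hyx : y ≤ x₀) :
    x₀ - (x₀ - y) ^ 2 / x₀ - (x₀ - y) ^ 3 / (6 * y * x₀ ^ 3) ≤ fEx y := by
  have hx₀ : 0 < x₀ := hy.trans_le hyx
  set u := 1 / y - 1 / x₀ with hu_def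
  have hu : u = (x₀ - y) / (y * x₀) := by
    rw [hu_def]
    field_simp
  have hu0 : 0 ≤ u := by
    rw [hu]
    exact div_nonneg (by linarith) (by positivity)
  have hsin : u - u ^ 3 / 6 ≤ |Real.sin (1 / y)| :=
    calc u - u ^ 3 / 6 ≤ Real.sin u := Real.sin_ge_sub_cube hu0
      _ ≤ |Real.sin u| := le_abs_self _
      _ = |Real.sin (1 / y)| := by
        rw [← abs_sin_add_of_sin_eq_zero hs u, hu_def, add_sub_cancel]
  calc x₀ - (x₀ - y) ^ 2 / x₀ - (x₀ - y) ^ 3 / (6 * y * x₀ ^ 3)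
      = y + y * y * (u - u ^ 3 / 6) := by
        rw [hu]
        field_simp
        ring
    _ ≤ y + y * |y| * |Real.sin (1 / y)| := by
        rw [abs_of_pos hy]
        gcongr
    _ = fEx y := (fEx_eq y).symm

lemma sub_two_mul_pow_five_le_fEx {x₀ y : ℝ} (hs : Real.sin (1 / x₀) = 0) (hx₀ : 0 < x₀)
    (hx₀_le : x₀ ≤ 1 / 2) (hy : x₀ - x₀ ^ 3 ≤ y) : x₀ - 2 * x₀ ^ 5 ≤ fEx y := by
  rcases le_total x₀ y with hxy | hyx
  · linarith [self_le_fEx (hx₀.le.trans hxy), pow_pos hx₀ 5]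
  have hd : x₀ - y ≤ x₀ ^ 3 := by linarith
  have hx₀_sq : x₀ ^ 2 ≤ 1 / 4 := by nlinarith
  have hy₀ : x₀ / 2 ≤ y := by nlinarith [mul_le_mul_of_nonneg_left hx₀_sq hx₀.le]
  refine le_trans ?_ (fEx_ge_of_sin_inv_eq_zero hs (by linarith) hyx)
  have hy_pos : 0 < y := by linarith
  have hd2 : (x₀ - y) ^ 2 / x₀ ≤ x₀ ^ 5 := by
    rw [div_le_iff₀ hx₀]
    nlinarith [pow_le_pow_left₀ (sub_nonneg.mpr hyx) hd 2]
  have hd3 : (x₀ - y) ^ 3 / (6 * y * x₀ ^ 3) ≤ x₀ ^ 5 := by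
    rw [div_le_iff₀ (by positivity)]
    nlinarith [pow_le_pow_left₀ (sub_nonneg.mpr hyx) hd 3, pow_pos hx₀ 9]
  linarith

lemma surMod_fEx : surMod (fun x => {fEx x}) 0 (fEx 0) = 0 := by
  refine surMod_eq_zero fun c hc ε hε U hU V hV => ?_
  rw [fEx_zero] at hV
  have hsmall : ∀ᶠ x in 𝓝 (0 : ℝ), x ∈ U ∩ V ∧ x ^ 3 < ε ∧ x < 1 / 2 ∧ 2 * x ^ 2 < c := by
    refine (show ∀ᶠ x in 𝓝 (0 : ℝ), x ∈ U ∩ V from inter_mem hU hV).and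
      (Eventually.and ?_ (Eventually.and ?_ ?_))
    · exact ((continuous_pow 3).tendsto' 0 0 (by simp)).eventually_lt_const hε
    · exact eventually_lt_nhds (by norm_num)
    · exact ((by fun_prop : Continuous fun x : ℝ => 2 * x ^ 2).tendsto' 0 0 (by simp)
        ).eventually_lt_const hc
  obtain ⟨k, ⟨⟨hU₀, hV₀⟩, hε₀, hx₀_le, hc₀⟩, hx₀⟩ := (tendsto_inv_natCast_mul_pi.eventually
    ((hsmall.filter_mono nhdsWithin_le_nhds).and eventually_mem_nhdsWithin)).exists
  set x₀ := ((k : ℝ) * Real.pi)⁻¹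
  replace hx₀ : 0 < x₀ := hx₀
  have hs : Real.sin (1 / x₀) = 0 := by
    rw [one_div, inv_inv]
    exact Real.sin_nat_mul_pi k
  refine ⟨x₀, hU₀, x₀, ⟨hV₀, (fEx_eq_self_of_sin_eq_zero hs).symm⟩, x₀ ^ 3, ⟨pow_pos hx₀ 3, hε₀⟩,
    fun hsub => ?_⟩
  have hmem : x₀ - c * x₀ ^ 3 ∈ closedBall x₀ (c * x₀ ^ 3) := by
    rw [Real.closedBall_eq_Icc]
    constructor <;> nlinarith [pow_pos hx₀ 3]
  obtain ⟨y, hy, hfy⟩ := svImage_singleton fEx _ ▸ hsub hmem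
  rw [Real.closedBall_eq_Icc] at hy
  have := sub_two_mul_pow_five_le_fEx hs hx₀ hx₀_le.le hy.1
  nlinarith [pow_pos hx₀ 3]

/-- `fEx` is Lipschitz near `0`, differentiable at `0` with `fEx'(0) = 1`,
open with linear rate at `0` with `lopen fEx (0) = 1`, yet `sur fEx (0) = 0` (so `fEx` is
not metrically regular around `(0,0)`). -/
theorem example_lopen_pos_sur_zero :
    (∃ ε > (0:ℝ), ∃ K : ℝ≥0, LipschitzOnWith K fEx (ball (0:ℝ) ε)) ∧
    HasDerivAt fEx 1 0 ∧
    lopenMod (fun x : ℝ => {fEx x}) 0 (fEx 0) = 1 ∧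
    surMod (fun x : ℝ => {fEx x}) 0 (fEx 0) = 0 :=
  ⟨⟨1, one_pos, 4, lipschitzOnWith_fEx⟩, hasDerivAt_fEx, lopenMod_fEx, surMod_fEx⟩
end
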